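/- arXiv:2202.05495 — 2 statements merged into one kernel-verified Lean document; each statement's English description precedes it below -/
import Mathlib

section
/- Let p ≥ 1, 1 ≤ k ≤ d, and let μ be a finite Borel measure on S_{d,k}. The map (r,s) ↦ IW_p^p(r,s) from Δ_N × Δ_N to ℝ is directionally Hadamard differentiable at every (r,s) ∈ Δ_N × Δ_N tangentially to Ω_N × Ω_N, with derivative (h₁,h₂) ↦ ∫_{S_{d,k}} sup_{(u,v) ∈ Φ*_p(r,s;𝒳_E)} (⟨u,h₁⟩ + ⟨v,h₂⟩) dμ(E). -/
open MeasureTheory ProbabilityTheory Filter Topology Matrix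

noncomputable section

namespace PRW

/-- Euclidean norm on `Fin n → ℝ`. -/
def eNorm {n : ℕ} (v : Fin n → ℝ) : ℝ := Real.sqrt (∑ i, v i ^ 2)

/-- Euclidean norm of a pair of vectors (norm on `ℝ^{2N}`). -/
def prodNorm {N : ℕ} (u v : Fin N → ℝ) : ℝ := Real.sqrt ((∑ i, u i ^ 2) + ∑ i, v i ^ 2)

/-- Euclidean diameter of a set of vectors. -/
def diamS {n : ℕ} (A : Set (Fin n → ℝ)) : ℝ :=
  sSup ((fun ab : (Fin n → ℝ) × (Fin n → ℝ) => eNorm (ab.1 - ab.2)) '' (A ×ˢ A))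

/-- Euclidean diameter of a finite point configuration. -/
def diamX {N d : ℕ} (x : Fin N → Fin d → ℝ) : ℝ :=
  sSup (Set.range fun ij : Fin N × Fin N => eNorm (x ij.1 - x ij.2))

/-- The open probability simplex `Δ_N`. -/
def simplex (N : ℕ) : Set (Fin N → ℝ) := {r | (∀ i, 0 < r i) ∧ ∑ i, r i = 1}

/-- Probability vectors (nonnegative entries summing to one). -/
def probVec (N : ℕ) : Set (Fin N → ℝ) := {r | (∀ i, 0 ≤ r i) ∧ ∑ i, r i = 1}

/-- The set of couplings `Π(r,s)`. -/
def planSet (N : ℕ) (r s : Fin N → ℝ) : Set (Fin N × Fin N → ℝ) :=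
  {π | (∀ ij, 0 ≤ π ij) ∧ (∀ i, ∑ j, π (i, j) = r i) ∧ ∀ j, ∑ i, π (i, j) = s j}

/-- `W_p^p` with a given cost vector `c`. -/
def Wpp {N : ℕ} (c : Fin N × Fin N → ℝ) (r s : Fin N → ℝ) : ℝ :=
  sInf ((fun π => ∑ ij, c ij * π ij) '' planSet N r s)

/-- Cost vector of the original (unprojected) points, `c_p(𝒳)`. -/
def cost0 {d N : ℕ} (x : Fin N → Fin d → ℝ) (p : ℝ) : Fin N × Fin N → ℝ :=
  fun ij => eNorm (x ij.1 - x ij.2) ^ p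

/-- `Eᵀ v` for a `d × k` matrix `E`. -/
def proj {d k : ℕ} (E : Fin d → Fin k → ℝ) (v : Fin d → ℝ) : Fin k → ℝ :=
  fun a => ∑ b, E b a * v b

/-- Cost vector of the projected points, `c_p(𝒳_E)`. -/
def pcost {d k N : ℕ} (x : Fin N → Fin d → ℝ) (E : Fin d → Fin k → ℝ) (p : ℝ) :
    Fin N × Fin N → ℝ :=
  fun ij => eNorm (proj E (x ij.1 - x ij.2)) ^ p

/-- The Stiefel manifold `S_{d,k}` of `d × k` matrices with orthonormal columns. -/
def Stiefel (d k : ℕ) : Set (Fin d → Fin k → ℝ) :=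
  {E | (Matrix.of E)ᵀ * Matrix.of E = 1}

/-- `IW_p^p(r,s)`: the integral of the projected `W_p^p` over directions. -/
def IWpp {d k N : ℕ} (x : Fin N → Fin d → ℝ) (μ : Measure (Stiefel d k)) (p : ℝ)
    (r s : Fin N → ℝ) : ℝ :=
  ∫ E, Wpp (pcost x E.1 p) r s ∂μ

/-- The integral projection robust Wasserstein distance `IW_p(r,s)`. -/
def IWp {d k N : ℕ} (x : Fin N → Fin d → ℝ) (μ : Measure (Stiefel d k)) (p : ℝ)
    (r s : Fin N → ℝ) : ℝ := IWpp x μ p r s ^ (1 / p)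

/-- The dual set `Φ*_p(r,s;𝒳)` (for the given cost vector `c`). -/
def dualPairs {N : ℕ} (c : Fin N × Fin N → ℝ) (r s : Fin N → ℝ) :
    Set ((Fin N → ℝ) × (Fin N → ℝ)) :=
  {uv | ((∑ i, uv.1 i * r i) + ∑ i, uv.2 i * s i) = Wpp c r s ∧
    ∀ i j, uv.1 i + uv.2 j ≤ c (i, j)}

/-- The dual set `Φ*_p(𝒳)` (for the given cost vector `c`). -/
def dualSingle {N : ℕ} (c : Fin N × Fin N → ℝ) : Set (Fin N → ℝ) :=
  {u | ∀ i j, u i - u j ≤ c (i, j)}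

/-- The multinomial covariance matrix `Σ(r)`. -/
def covMat {N : ℕ} (r : Fin N → ℝ) : Matrix (Fin N) (Fin N) ℝ :=
  Matrix.of fun i j => if i = j then r i * (1 - r i) else -(r i * r j)

/-- The standard Gaussian measure on `ℝ^N`. -/
def stdGaussianPi (N : ℕ) : Measure (Fin N → ℝ) :=
  Measure.pi fun _ => gaussianReal 0 1

/-- `G ∼ N(0,Σ)`: the law of `G` is the pushforward of the standard Gaussian on `ℝ^N`
under the positive semidefinite square root of `Σ`. -/
def IsGaussianWithCov {Ω : Type*} [MeasurableSpace Ω] (P : Measure Ω) {N : ℕ}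
    (G : Ω → Fin N → ℝ) (Sigma : Matrix (Fin N) (Fin N) ℝ) : Prop :=
  ∃ Sq : Matrix (Fin N) (Fin N) ℝ, Sq.PosSemidef ∧ Sq * Sq = Sigma ∧
    Measure.map G P = Measure.map Sq.mulVec (stdGaussianPi N)

/-- Empirical distribution of the first `n` samples. -/
def emp {Ω : Type*} {N : ℕ} (Z : ℕ → Ω → Fin N) (n : ℕ) (ω : Ω) : Fin N → ℝ :=
  fun i => (((Finset.range n).filter fun kk => Z kk ω = i).card : ℝ) / n

/-- Empirical distribution of a tuple. -/
def empTuple {N L : ℕ} (xs : Fin L → Fin N) : Fin N → ℝ :=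
  fun i => ((Finset.univ.filter fun kk => xs kk = i).card : ℝ) / L

/-- The discrete probability measure on `{1,…,N}` with weight vector `q`. -/
def discMeas {N : ℕ} (q : Fin N → ℝ) : Measure (Fin N) :=
  ∑ i, ENNReal.ofReal (q i) • Measure.dirac i

/-- The bootstrap sampling measure `q₁^{⊗L} ⊗ q₂^{⊗L}`. -/
def bootMeasure {N : ℕ} (L : ℕ) (q₁ q₂ : Fin N → ℝ) :
    Measure ((Fin L → Fin N) × (Fin L → Fin N)) :=
  (Measure.pi fun _ => discMeas q₁).prod (Measure.pi fun _ => discMeas q₂)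

/-- Bounded functions `ℝ → ℝ` with Lipschitz constant at most 1. -/
def BL1 : Set (ℝ → ℝ) := {h | (∃ C, ∀ x, |h x| ≤ C) ∧ LipschitzWith 1 h}

/-- The negative Boltzmann–Shannon entropy `φ`. -/
def ent {N : ℕ} (π : Fin N × Fin N → ℝ) : ℝ :=
  ∑ ij, (π ij * Real.log (π ij) - π ij + 1)

/-- The entropic regularized objective `π ↦ ⟨c,π⟩ + λ φ(π)`. -/
def entObj {N : ℕ} (c : Fin N × Fin N → ℝ) (lam : ℝ) (π : Fin N × Fin N → ℝ) : ℝ :=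
  (∑ ij, c ij * π ij) + lam * ent π

/-- The matrix `A_*` (the coupling constraint matrix `A` with its last row deleted). -/
def Astar (N : ℕ) : Matrix (Fin N ⊕ Fin (N - 1)) (Fin N × Fin N) ℝ :=
  Matrix.of fun a ij =>
    Sum.elim (fun i => if ij.1 = i then (1 : ℝ) else 0)
      (fun j => if (ij.2 : ℕ) = (j : ℕ) then (1 : ℝ) else 0) a

/-- Deletion of the last entry of a vector in `ℝ^N`. -/
def starDel {N : ℕ} (s : Fin N → ℝ) : Fin (N - 1) → ℝ :=
  fun j => s (Fin.castLE (Nat.sub_le N 1) j)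

/-- Recovery of `s ∈ ℝ^N` from `s_* ∈ ℝ^{N-1}` using that the entries sum to one. -/
def extendStar {N : ℕ} (t : Fin (N - 1) → ℝ) : Fin N → ℝ :=
  fun i => if h : (i : ℕ) < N - 1 then t ⟨i, h⟩ else 1 - ∑ j, t j

/-- The feasible set `{π ≥ 0 : A_* π = (r,t)}`. -/
def planSetStar (N : ℕ) (r : Fin N → ℝ) (t : Fin (N - 1) → ℝ) : Set (Fin N × Fin N → ℝ) :=
  {π | (∀ ij, 0 ≤ π ij) ∧ (∀ i, ∑ j, π (i, j) = r i) ∧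
    ∀ jj : Fin (N - 1), ∑ i, π (i, Fin.castLE (Nat.sub_le N 1) jj) = t jj}

/-- The open parameter set `O`. -/
def Oset (N : ℕ) : Set ((Fin N → ℝ) × (Fin (N - 1) → ℝ)) :=
  {rt | (∀ i, 0 < rt.1 i) ∧ (∀ j, 0 < rt.2 j) ∧ ∑ j, rt.2 j < ∑ i, rt.1 i}

/-- `plan` is the (entropic) regularized optimal transport plan `π_{p,λ}(·,·;𝒳_E)`. -/
def IsEntPlan {d k N : ℕ} (x : Fin N → Fin d → ℝ) (p lam : ℝ)
    (plan : (Fin N → ℝ) → (Fin N → ℝ) → (Fin d → Fin k → ℝ) → Fin N × Fin N → ℝ) : Prop :=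
  ∀ r s E, r ∈ probVec N → s ∈ probVec N →
    plan r s E ∈ planSet N r s ∧
      ∀ π ∈ planSet N r s, entObj (pcost x E p) lam (plan r s E) ≤ entObj (pcost x E p) lam π

/-- The regularized optimal transport distance `W_{p,λ}(r,s;𝒳_E)` (given the plan). -/
def Wpl {d k N : ℕ} (x : Fin N → Fin d → ℝ) (p : ℝ)
    (plan : (Fin N → ℝ) → (Fin N → ℝ) → (Fin d → Fin k → ℝ) → Fin N × Fin N → ℝ)
    (r s : Fin N → ℝ) (E : Fin d → Fin k → ℝ) : ℝ :=
  (∑ ij, pcost x E p ij * plan r s E ij) ^ (1 / p)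

/-- The regularized projection robust Wasserstein distance `PW_{p,λ}(r,s)`. -/
def PW {d k N : ℕ} (x : Fin N → Fin d → ℝ) (p : ℝ)
    (plan : (Fin N → ℝ) → (Fin N → ℝ) → (Fin d → Fin k → ℝ) → Fin N × Fin N → ℝ)
    (r s : Fin N → ℝ) : ℝ :=
  sSup (Set.range fun E : Stiefel d k => Wpl x p plan r s E.1)

/-- The set `Ψ*_p(r,s)` of maximizing directions. -/
def PsiStar {d k N : ℕ} (x : Fin N → Fin d → ℝ) (p : ℝ)
    (plan : (Fin N → ℝ) → (Fin N → ℝ) → (Fin d → Fin k → ℝ) → Fin N × Fin N → ℝ)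
    (r s : Fin N → ℝ) : Set (Fin d → Fin k → ℝ) :=
  {E | E ∈ Stiefel d k ∧ Wpl x p plan r s E = PW x p plan r s}

/-- The row vector `γᵀ D A_*ᵀ (A_* D A_*ᵀ)⁻¹` (for plan value `π` and cost `c`). -/
def derivRow {N : ℕ} (c : Fin N × Fin N → ℝ) (p : ℝ) (π : Fin N × Fin N → ℝ) :
    Fin N ⊕ Fin (N - 1) → ℝ :=
  Matrix.vecMul (fun ij => (1 / p) * (∑ ij', c ij' * π ij') ^ (1 / p - 1) * c ij)
    (Matrix.diagonal π * (Astar N)ᵀ * (Astar N * Matrix.diagonal π * (Astar N)ᵀ)⁻¹)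

variable {N : ℕ}

lemma simplex_subset_probVec : simplex N ⊆ probVec N :=
  fun r hr => ⟨fun i => (hr.1 i).le, hr.2⟩

lemma prodPlan_mem {r s : Fin N → ℝ} (hr : r ∈ probVec N) (hs : s ∈ probVec N) :
    (fun ij : Fin N × Fin N => r ij.1 * s ij.2) ∈ planSet N r s := by
  refine ⟨fun ij => mul_nonneg (hr.1 _) (hs.1 _), fun i => ?_, fun j => ?_⟩
  · dsimp only; rw [← Finset.mul_sum, hs.2, mul_one]
  · dsimp only; rw [← Finset.sum_mul, hr.2, one_mul]

lemma planSet_nonempty {r s : Fin N → ℝ} (hr : r ∈ probVec N) (hs : s ∈ probVec N) :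
    (planSet N r s).Nonempty := ⟨_, prodPlan_mem hr hs⟩

lemma plan_sum {r s : Fin N → ℝ} {π : Fin N × Fin N → ℝ} (hπ : π ∈ planSet N r s) :
    ∑ ij, π ij = ∑ i, r i := by
  rw [Fintype.sum_prod_type]
  exact Finset.sum_congr rfl fun i _ => hπ.2.1 i

lemma obj_nonneg {c : Fin N × Fin N → ℝ} (hc : ∀ ij, 0 ≤ c ij) {π : Fin N × Fin N → ℝ}
    (hπ : ∀ ij, 0 ≤ π ij) : 0 ≤ ∑ ij, c ij * π ij :=
  Finset.sum_nonneg fun ij _ => mul_nonneg (hc ij) (hπ ij)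

lemma obj_le {c : Fin N × Fin N → ℝ} {M : ℝ} (hc : ∀ ij, c ij ≤ M) (hc0 : ∀ ij, 0 ≤ c ij)
    {r s : Fin N → ℝ} (hr1 : ∑ i, r i = 1) {π : Fin N × Fin N → ℝ}
    (hπ : π ∈ planSet N r s) : ∑ ij, c ij * π ij ≤ M := by
  calc ∑ ij, c ij * π ij ≤ ∑ ij, M * π ij :=
        Finset.sum_le_sum fun ij _ => mul_le_mul_of_nonneg_right (hc ij) (hπ.1 ij)
    _ = M * ∑ ij, π ij := by rw [Finset.mul_sum]
    _ = M := by rw [plan_sum hπ, hr1, mul_one]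

lemma bddBelow_obj {c : Fin N × Fin N → ℝ} (hc : ∀ ij, 0 ≤ c ij) {r s : Fin N → ℝ} :
    BddBelow ((fun π => ∑ ij, c ij * π ij) '' planSet N r s) := by
  refine ⟨0, fun y hy => ?_⟩
  obtain ⟨π, hπ, rfl⟩ := hy
  exact obj_nonneg hc hπ.1

lemma Wpp_le_obj {c : Fin N × Fin N → ℝ} (hc : ∀ ij, 0 ≤ c ij) {r s : Fin N → ℝ}
    {π : Fin N × Fin N → ℝ} (hπ : π ∈ planSet N r s) :
    Wpp c r s ≤ ∑ ij, c ij * π ij :=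
  csInf_le (bddBelow_obj hc) ⟨π, hπ, rfl⟩

lemma le_Wpp {c : Fin N × Fin N → ℝ} {r s : Fin N → ℝ} {b : ℝ}
    (hr : r ∈ probVec N) (hs : s ∈ probVec N)
    (h : ∀ π ∈ planSet N r s, b ≤ ∑ ij, c ij * π ij) : b ≤ Wpp c r s :=
  le_csInf ((planSet_nonempty hr hs).image _) (by rintro y ⟨π, hπ, rfl⟩; exact h π hπ)

lemma Wpp_nonneg {c : Fin N × Fin N → ℝ} (hc : ∀ ij, 0 ≤ c ij) {r s : Fin N → ℝ}
    (hr : r ∈ probVec N) (hs : s ∈ probVec N) : 0 ≤ Wpp c r s :=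
  le_Wpp hr hs fun π hπ => obj_nonneg hc hπ.1

lemma Wpp_le {c : Fin N × Fin N → ℝ} {M : ℝ} (hc0 : ∀ ij, 0 ≤ c ij) (hc : ∀ ij, c ij ≤ M)
    {r s : Fin N → ℝ} (hr : r ∈ probVec N) (hs : s ∈ probVec N) : Wpp c r s ≤ M :=
  le_trans (Wpp_le_obj hc0 (prodPlan_mem hr hs)) (obj_le hc hc0 hr.2 (prodPlan_mem hr hs))

/-- dot product of marginals against a plan -/
lemma dual_obj_eq_plan_sum {u v r s : Fin N → ℝ} {π : Fin N × Fin N → ℝ}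
    (hπ : π ∈ planSet N r s) :
    ((∑ i, u i * r i) + ∑ i, v i * s i) = ∑ ij : Fin N × Fin N, (u ij.1 + v ij.2) * π ij := by
  rw [Fintype.sum_prod_type]
  have h1 : ∑ i, u i * r i = ∑ i, ∑ j, u i * π (i, j) := by
    refine Finset.sum_congr rfl fun i _ => ?_
    rw [← Finset.mul_sum, hπ.2.1 i]
  have h2 : ∑ j, v j * s j = ∑ j, ∑ i, v j * π (i, j) := by
    refine Finset.sum_congr rfl fun j _ => ?_
    rw [← Finset.mul_sum, hπ.2.2 j]
  rw [h1, h2, show (∑ j, ∑ i, v j * π (i, j)) = ∑ i, ∑ j, v j * π (i, j) from Finset.sum_comm]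
  rw [← Finset.sum_add_distrib]
  refine Finset.sum_congr rfl fun i _ => ?_
  rw [← Finset.sum_add_distrib]
  refine Finset.sum_congr rfl fun j _ => ?_
  ring

/-- Weak duality. -/
lemma weak_duality {c : Fin N × Fin N → ℝ} {u v r s : Fin N → ℝ}
    (hr : r ∈ probVec N) (hs : s ∈ probVec N)
    (hfeas : ∀ i j, u i + v j ≤ c (i, j)) :
    ((∑ i, u i * r i) + ∑ i, v i * s i) ≤ Wpp c r s := by
  refine le_Wpp hr hs fun π hπ => ?_
  rw [dual_obj_eq_plan_sum hπ]
  exact Finset.sum_le_sum fun ij _ => mul_le_mul_of_nonneg_right (hfeas ij.1 ij.2) (hπ.1 ij)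

lemma convex_probVec : Convex ℝ (probVec N) := by
  intro r hr s hs a b ha hb hab
  constructor
  · intro i
    have : (a • r + b • s) i = a * r i + b * s i := by simp [smul_eq_mul]
    rw [this]
    exact add_nonneg (mul_nonneg ha (hr.1 i)) (mul_nonneg hb (hs.1 i))
  · have : ∀ i, (a • r + b • s) i = a * r i + b * s i := by intro i; simp [smul_eq_mul]
    simp only [this]
    rw [Finset.sum_add_distrib, ← Finset.mul_sum, ← Finset.mul_sum, hr.2, hs.2]
    simpa using hab

lemma combo_plan_mem {r1 s1 r2 s2 : Fin N → ℝ} {π1 π2 : Fin N × Fin N → ℝ} {a b : ℝ}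
    (h1 : π1 ∈ planSet N r1 s1) (h2 : π2 ∈ planSet N r2 s2) (ha : 0 ≤ a) (hb : 0 ≤ b) :
    (fun ij => a * π1 ij + b * π2 ij) ∈
      planSet N (fun i => a * r1 i + b * r2 i) (fun j => a * s1 j + b * s2 j) := by
  refine ⟨fun ij => add_nonneg (mul_nonneg ha (h1.1 ij)) (mul_nonneg hb (h2.1 ij)),
    fun i => ?_, fun j => ?_⟩
  · rw [Finset.sum_add_distrib, ← Finset.mul_sum, ← Finset.mul_sum, h1.2.1 i, h2.2.1 i]
  · rw [Finset.sum_add_distrib, ← Finset.mul_sum, ← Finset.mul_sum, h1.2.2 j, h2.2.2 j]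

lemma Wpp_combo_le {c : Fin N × Fin N → ℝ} (hc0 : ∀ ij, 0 ≤ c ij)
    {r1 s1 r2 s2 : Fin N → ℝ} (h1r : r1 ∈ probVec N) (h1s : s1 ∈ probVec N)
    (h2r : r2 ∈ probVec N) (h2s : s2 ∈ probVec N) {a b : ℝ}
    (ha : 0 ≤ a) (hb : 0 ≤ b) :
    Wpp c (fun i => a * r1 i + b * r2 i) (fun j => a * s1 j + b * s2 j) ≤
      a * Wpp c r1 s1 + b * Wpp c r2 s2 := by
  refine le_of_forall_pos_le_add fun ε hε => ?_
  have hne1 : ((fun π => ∑ ij, c ij * π ij) '' planSet N r1 s1).Nonempty :=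
    (planSet_nonempty h1r h1s).image _
  have hne2 : ((fun π => ∑ ij, c ij * π ij) '' planSet N r2 s2).Nonempty :=
    (planSet_nonempty h2r h2s).image _
  obtain ⟨y1, hy1, hy1lt⟩ := exists_lt_of_csInf_lt hne1
    (show Wpp c r1 s1 < Wpp c r1 s1 + ε / (a + b + 1) by
      have : 0 < ε / (a + b + 1) := by positivity
      linarith)
  obtain ⟨y2, hy2, hy2lt⟩ := exists_lt_of_csInf_lt hne2
    (show Wpp c r2 s2 < Wpp c r2 s2 + ε / (a + b + 1) by
      have : 0 < ε / (a + b + 1) := by positivity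
      linarith)
  obtain ⟨π1, hπ1, rfl⟩ := hy1
  obtain ⟨π2, hπ2, rfl⟩ := hy2
  have hplan := combo_plan_mem hπ1 hπ2 ha hb
  have hle := Wpp_le_obj hc0 hplan
  have hobj : ∑ ij, c ij * (a * π1 ij + b * π2 ij) =
      a * ∑ ij, c ij * π1 ij + b * ∑ ij, c ij * π2 ij := by
    rw [Finset.mul_sum, Finset.mul_sum, ← Finset.sum_add_distrib]
    exact Finset.sum_congr rfl fun ij _ => by ring
  rw [hobj] at hle
  have hab1 : a * (ε / (a + b + 1)) + b * (ε / (a + b + 1)) ≤ ε := by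
    rw [← add_mul]
    rw [div_eq_mul_inv, ← mul_assoc]
    have h1 : (a + b) * ε * (a + b + 1)⁻¹ ≤ (a + b + 1) * ε * (a + b + 1)⁻¹ := by
      have : 0 < a + b + 1 := by linarith
      have h2 : (a + b) * ε ≤ (a + b + 1) * ε := by nlinarith
      exact mul_le_mul_of_nonneg_right h2 (by positivity)
    calc (a + b) * ε * (a + b + 1)⁻¹ ≤ (a + b + 1) * ε * (a + b + 1)⁻¹ := h1
      _ = ε := by field_simp
  calc Wpp c _ _ ≤ a * ∑ ij, c ij * π1 ij + b * ∑ ij, c ij * π2 ij := hle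
    _ ≤ a * (Wpp c r1 s1 + ε / (a + b + 1)) + b * (Wpp c r2 s2 + ε / (a + b + 1)) := by
        have := mul_le_mul_of_nonneg_left hy1lt.le ha
        have := mul_le_mul_of_nonneg_left hy2lt.le hb
        linarith
    _ ≤ a * Wpp c r1 s1 + b * Wpp c r2 s2 + ε := by
        have hexp : a * (Wpp c r1 s1 + ε / (a + b + 1)) + b * (Wpp c r2 s2 + ε / (a + b + 1)) =
            a * Wpp c r1 s1 + b * Wpp c r2 s2 +
              (a * (ε / (a + b + 1)) + b * (ε / (a + b + 1))) := by ring
        rw [hexp]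
        linarith

/-- The affine retraction onto the hyperplane of vectors summing to one. -/
def aff (N : ℕ) (w : Fin N → ℝ) : Fin N → ℝ := fun i => w i + (1 - ∑ j, w j) / N

lemma aff_sum (hN : 0 < N) (w : Fin N → ℝ) : ∑ i, aff N w i = 1 := by
  unfold aff
  rw [Finset.sum_add_distrib, Finset.sum_const, Finset.card_univ, Fintype.card_fin,
    nsmul_eq_mul]
  have hN' : (N : ℝ) ≠ 0 := Nat.cast_ne_zero.2 hN.ne'
  field_simp
  ring

lemma aff_id {w : Fin N → ℝ} (hw : ∑ j, w j = 1) : aff N w = w := by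
  funext i; simp [aff, hw]

lemma aff_combo {a b : ℝ} (hab : a + b = 1) (w w' : Fin N → ℝ) :
    aff N (a • w + b • w') = fun i => a * aff N w i + b * aff N w' i := by
  have hb' : b = 1 - a := by linarith
  subst hb'
  funext i
  have hsum : ∑ j, (a * w j + (1 - a) * w' j) = a * ∑ j, w j + (1 - a) * ∑ j, w' j := by
    rw [Finset.sum_add_distrib, Finset.mul_sum, Finset.mul_sum]
  simp only [aff, Pi.add_apply, Pi.smul_apply, smul_eq_mul]
  rw [hsum]
  set S1 := ∑ j, w j with hS1
  set S2 := ∑ j, w' j with hS2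
  by_cases hN : (N : ℝ) = 0
  · simp [hN]
  · field_simp; ring

lemma continuous_aff (i : Fin N) : Continuous fun w : Fin N → ℝ => aff N w i := by
  unfold aff
  exact (continuous_apply i).add
    (((continuous_const.sub (continuous_finset_sum _ fun j _ => continuous_apply j))).div_const _)

lemma sum_smul_single (r : Fin N → ℝ) :
    ∑ i, r i • (Pi.single i (1 : ℝ) : Fin N → ℝ) = r := by
  funext j
  rw [Finset.sum_apply]
  simp only [Pi.smul_apply, Pi.single_apply, smul_eq_mul, mul_ite, mul_one, mul_zero]
  rw [Finset.sum_ite_eq Finset.univ j r]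
  simp

lemma single_mem_probVec (i : Fin N) : Pi.single i (1 : ℝ) ∈ probVec N := by
  constructor
  · intro j
    rcases eq_or_ne j i with rfl | hji
    · simp
    · simp [Pi.single_apply, hji]
  · simp [Pi.single_apply]

lemma Wpp_single (c : Fin N × Fin N → ℝ) (i j : Fin N) :
    Wpp c (Pi.single i 1) (Pi.single j 1) = c (i, j) := by
  have hval : ∀ π ∈ planSet N (Pi.single i 1) (Pi.single j 1),
      ∑ ij, c ij * π ij = c (i, j) := by
    intro π hπ
    have hrow : ∀ i', i' ≠ i → ∀ j', π (i', j') = 0 := by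
      intro i' hi' j'
      have hle : π (i', j') ≤ ∑ j'', π (i', j'') :=
        Finset.single_le_sum (fun j'' _ => hπ.1 (i', j'')) (Finset.mem_univ j')
      have : ∑ j'', π (i', j'') = 0 := by rw [hπ.2.1 i', Pi.single_apply]; simp [hi']
      exact le_antisymm (by rw [← this]; exact hle) (hπ.1 (i', j'))
    have hcol : ∀ j', j' ≠ j → ∀ i', π (i', j') = 0 := by
      intro j' hj' i'
      have hle : π (i', j') ≤ ∑ i'', π (i'', j') :=
        Finset.single_le_sum (fun i'' _ => hπ.1 (i'', j')) (Finset.mem_univ i')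
      have : ∑ i'', π (i'', j') = 0 := by rw [hπ.2.2 j', Pi.single_apply]; simp [hj']
      exact le_antisymm (by rw [← this]; exact hle) (hπ.1 (i', j'))
    have hij : π (i, j) = 1 := by
      have hsum : ∑ j'', π (i, j'') = 1 := by rw [hπ.2.1 i]; simp
      rw [Finset.sum_eq_single j (fun j'' _ hj'' => hcol j'' hj'' i)
        (fun h => absurd (Finset.mem_univ j) h)] at hsum
      exact hsum
    rw [Finset.sum_eq_single (i, j)]
    · rw [hij, mul_one]
    · intro ij' _ hij'
      rcases eq_or_ne ij'.1 i with h1 | h1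
      · have h2 : ij'.2 ≠ j := by
          intro h2; exact hij' (Prod.ext h1 h2)
        rw [show ij' = (ij'.1, ij'.2) from rfl, hcol ij'.2 h2 ij'.1, mul_zero]
      · rw [show ij' = (ij'.1, ij'.2) from rfl, hrow ij'.1 h1 ij'.2, mul_zero]
    · intro h; exact absurd (Finset.mem_univ (i, j)) h
  have hne : (planSet N (Pi.single i (1:ℝ)) (Pi.single j 1)).Nonempty :=
    planSet_nonempty (single_mem_probVec i) (single_mem_probVec j)
  have himg : (fun π => ∑ ij, c ij * π ij) '' planSet N (Pi.single i 1) (Pi.single j 1)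
      = {c (i, j)} := by
    apply Set.eq_singleton_iff_nonempty_unique_mem.2
    exact ⟨hne.image _, by rintro y ⟨π, hπ, rfl⟩; exact hval π hπ⟩
  rw [Wpp, himg, csInf_singleton]

lemma combo_pos {a b p q : ℝ} (ha : 0 ≤ a) (hb : 0 ≤ b) (hab : a + b = 1)
    (hp : 0 < p) (hq : 0 < q) : 0 < a * p + b * q := by
  rcases eq_or_lt_of_le ha with rfl | ha'
  · have hb1 : b = 1 := by linarith
    subst hb1; simpa using hq
  · have h1 : 0 < a * p := mul_pos ha' hp
    have h2 : 0 ≤ b * q := mul_nonneg hb hq.le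
    linarith

/-- Strong duality: the set of optimal dual pairs is nonempty. -/
lemma dual_nonempty (hN : 0 < N) {c : Fin N × Fin N → ℝ} {M : ℝ}
    (hc0 : ∀ ij, 0 ≤ c ij) (hcM : ∀ ij, c ij ≤ M)
    {r s : Fin N → ℝ} (hr : r ∈ simplex N) (hs : s ∈ simplex N) :
    (dualPairs c r s).Nonempty := by
  classical
  set U : Set ((Fin N → ℝ) × (Fin N → ℝ)) :=
    {z | (∀ i, 0 < aff N z.1 i) ∧ ∀ i, 0 < aff N z.2 i} with hUdef
  set D : Set ((Fin N → ℝ) × (Fin N → ℝ)) :=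
    {z | aff N z.1 ∈ probVec N ∧ aff N z.2 ∈ probVec N} with hDdef
  set V : (Fin N → ℝ) × (Fin N → ℝ) → ℝ := fun z => Wpp c (aff N z.1) (aff N z.2) with hVdef
  have hUD : U ⊆ D := fun z hz =>
    ⟨⟨fun i => (hz.1 i).le, aff_sum hN z.1⟩, ⟨fun i => (hz.2 i).le, aff_sum hN z.2⟩⟩
  have haff_combo_fst : ∀ (a b : ℝ), a + b = 1 →
      ∀ z z' : (Fin N → ℝ) × (Fin N → ℝ),
      aff N ((a • z + b • z').1) = fun i => a * aff N z.1 i + b * aff N z'.1 i := by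
    intro a b hab z z'
    have h : (a • z + b • z').1 = a • z.1 + b • z'.1 := rfl
    rw [h, aff_combo hab]
  have haff_combo_snd : ∀ (a b : ℝ), a + b = 1 →
      ∀ z z' : (Fin N → ℝ) × (Fin N → ℝ),
      aff N ((a • z + b • z').2) = fun i => a * aff N z.2 i + b * aff N z'.2 i := by
    intro a b hab z z'
    have h : (a • z + b • z').2 = a • z.2 + b • z'.2 := rfl
    rw [h, aff_combo hab]
  have hDconv : Convex ℝ D := by
    intro z hz z' hz' a b ha hb hab
    constructor
    · rw [haff_combo_fst a b hab z z']
      refine ⟨fun i => add_nonneg (mul_nonneg ha (hz.1.1 i)) (mul_nonneg hb (hz'.1.1 i)), ?_⟩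
      rw [Finset.sum_add_distrib, ← Finset.mul_sum, ← Finset.mul_sum, hz.1.2, hz'.1.2]
      simpa using hab
    · rw [haff_combo_snd a b hab z z']
      refine ⟨fun i => add_nonneg (mul_nonneg ha (hz.2.1 i)) (mul_nonneg hb (hz'.2.1 i)), ?_⟩
      rw [Finset.sum_add_distrib, ← Finset.mul_sum, ← Finset.mul_sum, hz.2.2, hz'.2.2]
      simpa using hab
  have hUconv : Convex ℝ U := by
    intro z hz z' hz' a b ha hb hab
    constructor
    · rw [haff_combo_fst a b hab z z']
      exact fun i => combo_pos ha hb hab (hz.1 i) (hz'.1 i)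
    · rw [haff_combo_snd a b hab z z']
      exact fun i => combo_pos ha hb hab (hz.2 i) (hz'.2 i)
  have hVconvD : ConvexOn ℝ D V := by
    refine ⟨hDconv, fun z hz z' hz' a b ha hb hab => ?_⟩
    simp only [hVdef, smul_eq_mul]
    rw [haff_combo_fst a b hab z z', haff_combo_snd a b hab z z']
    exact Wpp_combo_le hc0 hz.1 hz.2 hz'.1 hz'.2 ha hb
  set x₀ : (Fin N → ℝ) × (Fin N → ℝ) := (r, s) with hx₀def
  have haffr : aff N r = r := aff_id hr.2
  have haffs : aff N s = s := aff_id hs.2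
  have hx₀U : x₀ ∈ U := ⟨by rw [hx₀def]; dsimp only; rw [haffr]; exact hr.1,
    by rw [hx₀def]; dsimp only; rw [haffs]; exact hs.1⟩
  have hx₀D : x₀ ∈ D := hUD hx₀U
  set W := Wpp c r s with hWdef
  have hVx₀ : V x₀ = W := by simp only [hVdef, hx₀def]; rw [haffr, haffs]
  have hUopen : IsOpen U := by
    have h1 : IsOpen {z : (Fin N → ℝ) × (Fin N → ℝ) | ∀ i, 0 < aff N z.1 i} := by
      rw [Set.setOf_forall]
      exact isOpen_iInter_of_finite fun i =>
        isOpen_lt continuous_const ((continuous_aff i).comp continuous_fst)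
    have h2 : IsOpen {z : (Fin N → ℝ) × (Fin N → ℝ) | ∀ i, 0 < aff N z.2 i} := by
      rw [Set.setOf_forall]
      exact isOpen_iInter_of_finite fun i =>
        isOpen_lt continuous_const ((continuous_aff i).comp continuous_snd)
    exact h1.and h2
  have hVconvU : ConvexOn ℝ U V := hVconvD.subset hUD hUconv
  have hVleM : ∀ z ∈ D, V z ≤ M := fun z hz => Wpp_le hc0 hcM hz.1 hz.2
  have hVcont : ContinuousOn V U := by
    have htfae := hVconvU.continuousOn_tfae hUopen ⟨x₀, hx₀U⟩
    have h4 : ∃ y ∈ U, (𝓝 y).IsBoundedUnder (· ≤ ·) V := by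
      refine ⟨x₀, hx₀U, Filter.isBoundedUnder_of_eventually_le (a := M) ?_⟩
      filter_upwards [hUopen.mem_nhds hx₀U] with z hz using hVleM z (hUD hz)
    exact (htfae.out 3 1).1 h4
  set S : Set (((Fin N → ℝ) × (Fin N → ℝ)) × ℝ) := {zt | zt.1 ∈ U ∧ V zt.1 < zt.2} with hSdef
  have hSopen : IsOpen S := by
    have hF : ContinuousOn (fun zt : ((Fin N → ℝ) × (Fin N → ℝ)) × ℝ => V zt.1 - zt.2)
        (U ×ˢ (Set.univ : Set ℝ)) :=
      (hVcont.comp continuous_fst.continuousOn fun zt hzt => hzt.1).sub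
        continuous_snd.continuousOn
    have hopen := hF.isOpen_inter_preimage (hUopen.prod isOpen_univ) (isOpen_Iio (a := (0:ℝ)))
    have heq : S = (U ×ˢ (Set.univ : Set ℝ)) ∩
        ((fun zt : ((Fin N → ℝ) × (Fin N → ℝ)) × ℝ => V zt.1 - zt.2) ⁻¹' Set.Iio 0) := by
      ext zt
      simp only [hSdef, Set.mem_setOf_eq, Set.mem_inter_iff, Set.mem_prod, Set.mem_univ,
        and_true, Set.mem_preimage, Set.mem_Iio, sub_neg]
    rw [heq]; exact hopen
  have hSconv : Convex ℝ S := by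
    intro zt h1 zt' h2 a b ha hb hab
    refine ⟨hUconv h1.1 h2.1 ha hb hab, ?_⟩
    have hle := hVconvU.2 h1.1 h2.1 ha hb hab
    have hfst : (a • zt + b • zt').1 = a • zt.1 + b • zt'.1 := rfl
    have hsnd : (a • zt + b • zt').2 = a * zt.2 + b * zt'.2 := rfl
    rw [Set.mem_setOf_eq] at h1 h2
    rw [hfst] at *
    rw [hsnd]
    rcases eq_or_lt_of_le ha with rfl | ha'
    · have hb1 : b = 1 := by linarith
      subst hb1
      simpa using h2.2
    · have hA : a * V zt.1 < a * zt.2 := mul_lt_mul_of_pos_left h1.2 ha'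
      have hB : b * V zt'.1 ≤ b * zt'.2 := mul_le_mul_of_nonneg_left h2.2.le hb
      have : V (a • zt.1 + b • zt'.1) ≤ a * V zt.1 + b * V zt'.1 := by
        simpa [smul_eq_mul] using hle
      linarith
  have hx₀S : ((x₀, W) : ((Fin N → ℝ) × (Fin N → ℝ)) × ℝ) ∉ S := by
    intro h
    rw [hSdef, Set.mem_setOf_eq] at h
    exact absurd (hVx₀ ▸ h.2) (lt_irrefl W)
  obtain ⟨f, hf⟩ := geometric_hahn_banach_open_point hSconv hSopen hx₀S
  set β := f (((0 : (Fin N → ℝ) × (Fin N → ℝ)), (1 : ℝ))) with hβdef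
  have hdec : ∀ (z : (Fin N → ℝ) × (Fin N → ℝ)) (t : ℝ), f (z, t) = f (z, 0) + t * β := by
    intro z t
    have harg : ((z, t) : ((Fin N → ℝ) × (Fin N → ℝ)) × ℝ) =
        (z, 0) + t • ((0 : (Fin N → ℝ) × (Fin N → ℝ)), (1 : ℝ)) := by
      simp [Prod.ext_iff]
    rw [harg, map_add, _root_.map_smul, smul_eq_mul, hβdef]
  have hmemS : ∀ z ∈ U, ∀ ε > (0:ℝ), f (z, 0) + (V z + ε) * β < f (x₀, 0) + W * β := by
    intro z hz ε hε
    have hmem : ((z, V z + ε) : ((Fin N → ℝ) × (Fin N → ℝ)) × ℝ) ∈ S := by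
      simp only [hSdef, Set.mem_setOf_eq]
      exact ⟨hz, by linarith⟩
    have h := hf _ hmem
    rwa [hdec z (V z + ε), hdec x₀ W] at h
  have hβ : β < 0 := by
    have h := hmemS x₀ hx₀U 1 one_pos
    rw [hVx₀] at h
    nlinarith
  have hβne : β ≠ 0 := ne_of_lt hβ
  have hsub : ∀ z ∈ U, f (z, 0) + V z * β ≤ f (x₀, 0) + W * β := by
    intro z hz
    by_contra hcon
    push_neg at hcon
    set ε := (f (z, 0) + V z * β - (f (x₀, 0) + W * β)) / (-β) with hεdef
    have hεpos : 0 < ε := div_pos (by linarith) (by linarith)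
    have h := hmemS z hz ε hεpos
    have hεβ : ε * β = -(f (z, 0) + V z * β - (f (x₀, 0) + W * β)) := by
      have hne : -β ≠ 0 := neg_ne_zero.2 hβne
      have h' : ε * -β = f (z, 0) + V z * β - (f (x₀, 0) + W * β) := by
        rw [hεdef]; exact div_mul_cancel₀ _ hne
      have h'' : ε * β = -(ε * -β) := by ring
      rw [h'', h']
    have hexp : (V z + ε) * β = V z * β + ε * β := by ring
    rw [hexp] at h
    linarith
  set φ : (Fin N → ℝ) × (Fin N → ℝ) → ℝ := fun z => (f (x₀, 0) - f (z, 0)) / β with hφdef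
  have hgrad : ∀ z ∈ U, W + φ z ≤ V z := by
    intro z hz
    have h := hsub z hz
    have h2 : (V z - W) * β ≤ f (x₀, 0) - f (z, 0) := by nlinarith
    have h3 : (f (x₀, 0) - f (z, 0)) / β ≤ V z - W := by
      rw [div_le_iff_of_neg hβ]
      exact h2
    simp only [hφdef]
    linarith
  have hφmid : ∀ z : (Fin N → ℝ) × (Fin N → ℝ),
      φ ((1/2 : ℝ) • x₀ + (1/2 : ℝ) • z) = (1/2 : ℝ) * φ z := by
    intro z
    have hdecomp : (((1/2 : ℝ) • x₀ + (1/2 : ℝ) • z, (0:ℝ)) :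
        ((Fin N → ℝ) × (Fin N → ℝ)) × ℝ) =
        (1/2 : ℝ) • ((x₀, (0:ℝ))) + (1/2 : ℝ) • ((z, (0:ℝ))) := by
      simp [Prod.ext_iff]
    simp only [hφdef]
    rw [hdecomp, map_add, _root_.map_smul, _root_.map_smul, smul_eq_mul, smul_eq_mul]
    field_simp
    ring
  have hext : ∀ z ∈ D, W + φ z ≤ V z := by
    intro z hz
    have hmidU : (1/2 : ℝ) • x₀ + (1/2 : ℝ) • z ∈ U := by
      constructor
      · rw [haff_combo_fst (1/2) (1/2) (by norm_num) x₀ z]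
        intro i
        have h1 : 0 < aff N x₀.1 i := hx₀U.1 i
        have h2 : 0 ≤ aff N z.1 i := hz.1.1 i
        dsimp only
        nlinarith
      · rw [haff_combo_snd (1/2) (1/2) (by norm_num) x₀ z]
        intro i
        have h1 : 0 < aff N x₀.2 i := hx₀U.2 i
        have h2 : 0 ≤ aff N z.2 i := hz.2.1 i
        dsimp only
        nlinarith
    have h1 := hgrad _ hmidU
    have h2 := hVconvD.2 hx₀D hz (by norm_num : (0:ℝ) ≤ 1/2) (by norm_num : (0:ℝ) ≤ 1/2)
      (by norm_num : (1:ℝ)/2 + 1/2 = 1)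
    rw [hφmid z] at h1
    rw [smul_eq_mul, smul_eq_mul, hVx₀] at h2
    linarith
  -- extract dual potentials
  set u' : Fin N → ℝ := fun i =>
    -(f (((Pi.single i (1:ℝ) : Fin N → ℝ), (0 : Fin N → ℝ)), (0:ℝ))) / β with hu'def
  set v' : Fin N → ℝ := fun j =>
    -(f (((0 : Fin N → ℝ), (Pi.single j (1:ℝ) : Fin N → ℝ)), (0:ℝ))) / β with hv'def
  set κ := f ((x₀, (0:ℝ))) / β with hκdef
  have hfeasible : ∀ i j, (u' i + κ + W) + v' j ≤ c (i, j) := by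
    intro i j
    have hyD : (((Pi.single i (1:ℝ) : Fin N → ℝ), (Pi.single j (1:ℝ) : Fin N → ℝ)) :
        (Fin N → ℝ) × (Fin N → ℝ)) ∈ D := by
      constructor
      · dsimp only; rw [aff_id (single_mem_probVec i).2]; exact single_mem_probVec i
      · dsimp only; rw [aff_id (single_mem_probVec j).2]; exact single_mem_probVec j
    have h := hext _ hyD
    have hVy : V (((Pi.single i (1:ℝ) : Fin N → ℝ), (Pi.single j (1:ℝ) : Fin N → ℝ))) =
        c (i, j) := by
      simp only [hVdef]
      rw [aff_id (single_mem_probVec i).2, aff_id (single_mem_probVec j).2, Wpp_single]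
    have hsplit : ((((Pi.single i (1:ℝ) : Fin N → ℝ), (Pi.single j (1:ℝ) : Fin N → ℝ)), (0:ℝ)) :
        ((Fin N → ℝ) × (Fin N → ℝ)) × ℝ) =
        (((Pi.single i (1:ℝ) : Fin N → ℝ), (0 : Fin N → ℝ)), (0:ℝ)) +
        (((0 : Fin N → ℝ), (Pi.single j (1:ℝ) : Fin N → ℝ)), (0:ℝ)) := by
      simp [Prod.ext_iff]
    have hφy : φ (((Pi.single i (1:ℝ) : Fin N → ℝ), (Pi.single j (1:ℝ) : Fin N → ℝ))) =
        κ + u' i + v' j := by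
      simp only [hφdef, hu'def, hv'def, hκdef]
      rw [hsplit, map_add]
      field_simp
      ring
    rw [hVy, hφy] at h
    linarith
  -- value of the dual objective
  have hsum_fst : ∑ i, r i • ((((Pi.single i (1:ℝ) : Fin N → ℝ), (0 : Fin N → ℝ)), (0:ℝ)) :
      ((Fin N → ℝ) × (Fin N → ℝ)) × ℝ) = (((r, (0 : Fin N → ℝ)), (0:ℝ))) := by
    apply Prod.ext
    · rw [Prod.fst_sum]
      apply Prod.ext
      · rw [Prod.fst_sum]
        exact sum_smul_single r
      · rw [Prod.snd_sum]
        simp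
    · rw [Prod.snd_sum]
      simp
  have hsum_snd : ∑ j, s j • ((((0 : Fin N → ℝ), (Pi.single j (1:ℝ) : Fin N → ℝ)), (0:ℝ)) :
      ((Fin N → ℝ) × (Fin N → ℝ)) × ℝ) = ((((0 : Fin N → ℝ), s), (0:ℝ))) := by
    apply Prod.ext
    · rw [Prod.fst_sum]
      apply Prod.ext
      · rw [Prod.fst_sum]
        simp
      · rw [Prod.snd_sum]
        exact sum_smul_single s
    · rw [Prod.snd_sum]
      simp
  have hfr : f (((r, (0 : Fin N → ℝ)), (0:ℝ))) =
      ∑ i, r i * f (((Pi.single i (1:ℝ) : Fin N → ℝ), (0 : Fin N → ℝ)), (0:ℝ)) := by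
    rw [← hsum_fst, map_sum]
    exact Finset.sum_congr rfl fun i _ => by rw [_root_.map_smul, smul_eq_mul]
  have hfs : f ((((0 : Fin N → ℝ), s), (0:ℝ))) =
      ∑ j, s j * f (((0 : Fin N → ℝ), (Pi.single j (1:ℝ) : Fin N → ℝ)), (0:ℝ)) := by
    rw [← hsum_snd, map_sum]
    exact Finset.sum_congr rfl fun j _ => by rw [_root_.map_smul, smul_eq_mul]
  have hx₀split : f (((r, (0 : Fin N → ℝ)), (0:ℝ))) + f ((((0 : Fin N → ℝ), s), (0:ℝ))) =
      f ((x₀, (0:ℝ))) := by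
    rw [← map_add]
    congr 1
    simp [hx₀def, Prod.ext_iff]
  have h1 : ∑ i, u' i * r i =
      -(f (((r, (0 : Fin N → ℝ)), (0:ℝ)))) / β := by
    calc ∑ i, u' i * r i
        = ∑ i, -(r i * f (((Pi.single i (1:ℝ) : Fin N → ℝ), (0 : Fin N → ℝ)), (0:ℝ))) / β := by
          refine Finset.sum_congr rfl fun i _ => ?_
          simp only [hu'def]
          ring
      _ = -(∑ i, r i * f (((Pi.single i (1:ℝ) : Fin N → ℝ), (0 : Fin N → ℝ)), (0:ℝ))) / β := by
          rw [← Finset.sum_div, ← Finset.sum_neg_distrib]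
      _ = -(f (((r, (0 : Fin N → ℝ)), (0:ℝ)))) / β := by rw [← hfr]
  have h2 : ∑ j, v' j * s j =
      -(f ((((0 : Fin N → ℝ), s), (0:ℝ)))) / β := by
    calc ∑ j, v' j * s j
        = ∑ j, -(s j * f (((0 : Fin N → ℝ), (Pi.single j (1:ℝ) : Fin N → ℝ)), (0:ℝ))) / β := by
          refine Finset.sum_congr rfl fun j _ => ?_
          simp only [hv'def]
          ring
      _ = -(∑ j, s j * f (((0 : Fin N → ℝ), (Pi.single j (1:ℝ) : Fin N → ℝ)), (0:ℝ))) / β := by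
          rw [← Finset.sum_div, ← Finset.sum_neg_distrib]
      _ = -(f ((((0 : Fin N → ℝ), s), (0:ℝ)))) / β := by rw [← hfs]
  have hkey : (∑ i, u' i * r i) + ∑ j, v' j * s j = -κ := by
    rw [h1, h2, hκdef, ← add_div, ← neg_add, hx₀split, neg_div]
  refine ⟨((fun i => u' i + κ + W), v'), ?_, hfeasible⟩
  have hobj : ∑ i, (u' i + κ + W) * r i = (∑ i, u' i * r i) + (κ + W) := by
    have hterm : ∀ i, (u' i + κ + W) * r i = u' i * r i + (κ + W) * r i := fun i => by ring
    rw [Finset.sum_congr rfl fun i _ => hterm i, Finset.sum_add_distrib, ← Finset.mul_sum,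
      hr.2, mul_one]
  show (∑ i, (u' i + κ + W) * r i) + ∑ j, v' j * s j = Wpp c r s
  rw [hobj]
  have : (∑ i, u' i * r i) + (κ + W) + ∑ j, v' j * s j =
      ((∑ i, u' i * r i) + ∑ j, v' j * s j) + (κ + W) := by ring
  rw [this, hkey]
  simp [hWdef]

lemma dual_tight_row (hN : 0 < N) {c : Fin N × Fin N → ℝ} {r s u v : Fin N → ℝ}
    (hr : r ∈ simplex N) (hs : s ∈ simplex N) (huv : (u, v) ∈ dualPairs c r s) (i' : Fin N) :
    ∃ j, u i' + v j = c (i', j) := by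
  classical
  by_contra hcon
  push_neg at hcon
  haveI : Nonempty (Fin N) := ⟨⟨0, hN⟩⟩
  set ε := Finset.univ.inf' Finset.univ_nonempty (fun j => c (i', j) - v j - u i') with hε
  have hεpos : 0 < ε := by
    rw [hε, Finset.lt_inf'_iff]
    intro j _
    have h1 := huv.2 i' j
    have h2 := hcon j
    rcases lt_or_eq_of_le h1 with h | h
    · linarith
    · exact absurd h h2
  set u2 : Fin N → ℝ := fun i => if i = i' then u i + ε else u i with hu2
  have hfeas2 : ∀ i j, u2 i + v j ≤ c (i, j) := by
    intro i j
    by_cases h : i = i'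
    · subst h
      simp only [hu2, if_pos rfl]
      have hle : ε ≤ c (i, j) - v j - u i := Finset.inf'_le _ (Finset.mem_univ j)
      linarith
    · simp only [hu2, if_neg h]
      exact huv.2 i j
  have hweak := weak_duality (u := u2) (v := v)
    (simplex_subset_probVec hr) (simplex_subset_probVec hs) hfeas2
  have hsum2 : ∑ i, u2 i * r i = (∑ i, u i * r i) + ε * r i' := by
    have hterm : ∀ i, u2 i * r i = u i * r i + (if i = i' then ε * r i' else 0) := by
      intro i
      by_cases h : i = i'
      · subst h; simp only [hu2, if_pos rfl, if_true]; ring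
      · simp only [hu2, if_neg h, add_zero]
    rw [Finset.sum_congr rfl fun i _ => hterm i, Finset.sum_add_distrib,
      Finset.sum_ite_eq' Finset.univ i' (fun _ => ε * r i')]
    simp
  rw [hsum2] at hweak
  have hεr : 0 < ε * r i' := mul_pos hεpos (hr.1 i')
  have hobj := huv.1
  simp only at hobj
  linarith

lemma dual_tight_col (hN : 0 < N) {c : Fin N × Fin N → ℝ} {r s u v : Fin N → ℝ}
    (hr : r ∈ simplex N) (hs : s ∈ simplex N) (huv : (u, v) ∈ dualPairs c r s) (j' : Fin N) :
    ∃ i, u i + v j' = c (i, j') := by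
  classical
  by_contra hcon
  push_neg at hcon
  haveI : Nonempty (Fin N) := ⟨⟨0, hN⟩⟩
  set ε := Finset.univ.inf' Finset.univ_nonempty (fun i => c (i, j') - v j' - u i) with hε
  have hεpos : 0 < ε := by
    rw [hε, Finset.lt_inf'_iff]
    intro i _
    have h1 := huv.2 i j'
    have h2 := hcon i
    rcases lt_or_eq_of_le h1 with h | h
    · linarith
    · exact absurd h h2
  set v2 : Fin N → ℝ := fun j => if j = j' then v j + ε else v j with hv2
  have hfeas2 : ∀ i j, u i + v2 j ≤ c (i, j) := by
    intro i j
    by_cases h : j = j'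
    · subst h
      simp only [hv2, if_pos rfl]
      have hle : ε ≤ c (i, j) - v j - u i := Finset.inf'_le _ (Finset.mem_univ i)
      linarith
    · simp only [hv2, if_neg h]
      exact huv.2 i j
  have hweak := weak_duality (u := u) (v := v2)
    (simplex_subset_probVec hr) (simplex_subset_probVec hs) hfeas2
  have hsum2 : ∑ j, v2 j * s j = (∑ j, v j * s j) + ε * s j' := by
    have hterm : ∀ j, v2 j * s j = v j * s j + (if j = j' then ε * s j' else 0) := by
      intro j
      by_cases h : j = j'
      · subst h; simp only [hv2, if_pos rfl, if_true]; ring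
      · simp only [hv2, if_neg h, add_zero]
    rw [Finset.sum_congr rfl fun j _ => hterm j, Finset.sum_add_distrib,
      Finset.sum_ite_eq' Finset.univ j' (fun _ => ε * s j')]
    simp
  rw [hsum2] at hweak
  have hεs : 0 < ε * s j' := mul_pos hεpos (hs.1 j')
  have hobj := huv.1
  simp only at hobj
  linarith

lemma dual_u_diff_le (hN : 0 < N) {c : Fin N × Fin N → ℝ} {M : ℝ}
    (hc0 : ∀ ij, 0 ≤ c ij) (hcM : ∀ ij, c ij ≤ M) {r s u v : Fin N → ℝ}
    (hr : r ∈ simplex N) (hs : s ∈ simplex N) (huv : (u, v) ∈ dualPairs c r s)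
    (i i' : Fin N) : u i - u i' ≤ M := by
  obtain ⟨j, hj⟩ := dual_tight_row hN hr hs huv i'
  have hfeas := huv.2 i j
  have h1 : 0 ≤ c (i', j) := hc0 _
  have h2 : c (i, j) ≤ M := hcM _
  linarith

/-- Every optimal dual pair can be normalized (by a shift) into a fixed compact box,
without changing the objective against mean-zero directions. -/
lemma dual_normalize (hN : 0 < N) {c : Fin N × Fin N → ℝ} {M : ℝ}
    (hc0 : ∀ ij, 0 ≤ c ij) (hcM : ∀ ij, c ij ≤ M) {r s u v : Fin N → ℝ}
    (hr : r ∈ simplex N) (hs : s ∈ simplex N) (huv : (u, v) ∈ dualPairs c r s) :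
    ∃ u' v' : Fin N → ℝ, (u', v') ∈ dualPairs c r s ∧ (∀ i, |u' i| ≤ M) ∧ (∀ j, |v' j| ≤ M) ∧
      ∀ h₁ h₂ : Fin N → ℝ, ∑ i, h₁ i = 0 → ∑ i, h₂ i = 0 →
        ((∑ i, u' i * h₁ i) + ∑ i, v' i * h₂ i) = (∑ i, u i * h₁ i) + ∑ i, v i * h₂ i := by
  set i0 : Fin N := ⟨0, hN⟩ with hi0
  refine ⟨fun i => u i - u i0, fun j => v j + u i0, ⟨?_, ?_⟩, ?_, ?_, ?_⟩
  · have hobj := huv.1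
    dsimp only at hobj ⊢
    have e1 : ∑ i, (u i - u i0) * r i = (∑ i, u i * r i) - u i0 * ∑ i, r i := by
      rw [Finset.mul_sum, ← Finset.sum_sub_distrib]
      exact Finset.sum_congr rfl fun i _ => by ring
    have e2 : ∑ j, (v j + u i0) * s j = (∑ j, v j * s j) + u i0 * ∑ j, s j := by
      rw [Finset.mul_sum, ← Finset.sum_add_distrib]
      exact Finset.sum_congr rfl fun j _ => by ring
    rw [e1, e2, hr.2, hs.2]
    linarith [hobj]
  · intro i j
    have h := huv.2 i j
    dsimp only
    linarith
  · intro i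
    show |u i - u i0| ≤ M
    rw [abs_le]
    constructor
    · have h := dual_u_diff_le hN hc0 hcM hr hs huv i0 i
      linarith
    · have h := dual_u_diff_le hN hc0 hcM hr hs huv i i0
      linarith
  · intro j
    show |v j + u i0| ≤ M
    rw [abs_le]
    constructor
    · obtain ⟨i1, hi1⟩ := dual_tight_col hN hr hs huv j
      have h1 : 0 ≤ c (i1, j) := hc0 _
      have h2 := dual_u_diff_le hN hc0 hcM hr hs huv i1 i0
      linarith
    · have hfeas := huv.2 i0 j
      have h2 : c (i0, j) ≤ M := hcM _
      linarith
  · intro h₁ h₂ hh₁ hh₂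
    have e1 : ∑ i, (u i - u i0) * h₁ i = (∑ i, u i * h₁ i) - u i0 * ∑ i, h₁ i := by
      rw [Finset.mul_sum, ← Finset.sum_sub_distrib]
      exact Finset.sum_congr rfl fun i _ => by ring
    have e2 : ∑ j, (v j + u i0) * h₂ j = (∑ j, v j * h₂ j) + u i0 * ∑ j, h₂ j := by
      rw [Finset.mul_sum, ← Finset.sum_add_distrib]
      exact Finset.sum_congr rfl fun j _ => by ring
    rw [e1, e2, hh₁, hh₂]
    ring

lemma dual_obj_bddAbove (hN : 0 < N) {c : Fin N × Fin N → ℝ} {M : ℝ}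
    (hc0 : ∀ ij, 0 ≤ c ij) (hcM : ∀ ij, c ij ≤ M) {r s : Fin N → ℝ}
    (hr : r ∈ simplex N) (hs : s ∈ simplex N) {h₁ h₂ : Fin N → ℝ}
    (hh₁ : ∑ i, h₁ i = 0) (hh₂ : ∑ i, h₂ i = 0) {u v : Fin N → ℝ}
    (huv : (u, v) ∈ dualPairs c r s) :
    ((∑ i, u i * h₁ i) + ∑ i, v i * h₂ i) ≤ M * ((∑ i, |h₁ i|) + ∑ i, |h₂ i|) := by
  obtain ⟨u', v', hmem, hub, hvb, hshift⟩ := dual_normalize hN hc0 hcM hr hs huv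
  rw [← hshift h₁ h₂ hh₁ hh₂]
  have hM0 : 0 ≤ M := le_trans (hc0 (⟨0, hN⟩, ⟨0, hN⟩)) (hcM _)
  have b1 : ∑ i, u' i * h₁ i ≤ ∑ i, M * |h₁ i| := by
    refine Finset.sum_le_sum fun i _ => ?_
    calc u' i * h₁ i ≤ |u' i * h₁ i| := le_abs_self _
      _ = |u' i| * |h₁ i| := abs_mul _ _
      _ ≤ M * |h₁ i| := mul_le_mul_of_nonneg_right (hub i) (abs_nonneg _)
  have b2 : ∑ i, v' i * h₂ i ≤ ∑ i, M * |h₂ i| := by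
    refine Finset.sum_le_sum fun i _ => ?_
    calc v' i * h₂ i ≤ |v' i * h₂ i| := le_abs_self _
      _ = |v' i| * |h₂ i| := abs_mul _ _
      _ ≤ M * |h₂ i| := mul_le_mul_of_nonneg_right (hvb i) (abs_nonneg _)
  rw [← Finset.mul_sum] at b1 b2
  rw [mul_add]
  linarith

lemma pairing_tendsto {A B : ℕ → Fin N → ℝ} {a b : Fin N → ℝ}
    (hA : Tendsto A atTop (𝓝 a)) (hB : Tendsto B atTop (𝓝 b)) :
    Tendsto (fun n => ∑ i, A n i * B n i) atTop (𝓝 (∑ i, a i * b i)) :=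
  tendsto_finset_sum _ fun i _ =>
    (tendsto_pi_nhds.1 hA i).mul (tendsto_pi_nhds.1 hB i)

lemma sum_perturb {u r γ : Fin N → ℝ} {τ : ℝ} :
    ∑ i, u i * (r + τ • γ) i = (∑ i, u i * r i) + τ * ∑ i, u i * γ i := by
  rw [Finset.mul_sum, ← Finset.sum_add_distrib]
  refine Finset.sum_congr rfl fun i _ => ?_
  simp only [Pi.add_apply, Pi.smul_apply, smul_eq_mul]
  ring

lemma quot_le_pairing {c : Fin N × Fin N → ℝ} {r s γ₁ γ₂ : Fin N → ℝ} {τ : ℝ} (hτ : 0 < τ)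
    (hr : r ∈ probVec N) (hs : s ∈ probVec N) {u v : Fin N → ℝ}
    (huv : (u, v) ∈ dualPairs c (r + τ • γ₁) (s + τ • γ₂)) :
    (Wpp c (r + τ • γ₁) (s + τ • γ₂) - Wpp c r s) / τ ≤
      (∑ i, u i * γ₁ i) + ∑ i, v i * γ₂ i := by
  have hW' := huv.1
  have hW := weak_duality (u := u) (v := v) hr hs huv.2
  rw [div_le_iff₀ hτ]
  have e1 := sum_perturb (u := u) (r := r) (γ := γ₁) (τ := τ)
  have e2 := sum_perturb (u := v) (r := s) (γ := γ₂) (τ := τ)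
  dsimp only at hW'
  rw [e1, e2] at hW'
  have hexp : ((∑ i, u i * γ₁ i) + ∑ i, v i * γ₂ i) * τ =
      τ * (∑ i, u i * γ₁ i) + τ * (∑ i, v i * γ₂ i) := by ring
  rw [hexp]
  linarith

lemma quot_ge_pairing {c : Fin N × Fin N → ℝ} {r s γ₁ γ₂ : Fin N → ℝ} {τ : ℝ} (hτ : 0 < τ)
    (hr' : (r + τ • γ₁) ∈ probVec N) (hs' : (s + τ • γ₂) ∈ probVec N) {u v : Fin N → ℝ}
    (huv : (u, v) ∈ dualPairs c r s) :
    (∑ i, u i * γ₁ i) + ∑ i, v i * γ₂ i ≤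
      (Wpp c (r + τ • γ₁) (s + τ • γ₂) - Wpp c r s) / τ := by
  have hW := huv.1
  have hW' := weak_duality (u := u) (v := v) hr' hs' huv.2
  rw [le_div_iff₀ hτ]
  have e1 := sum_perturb (u := u) (r := r) (γ := γ₁) (τ := τ)
  have e2 := sum_perturb (u := v) (r := s) (γ := γ₂) (τ := τ)
  rw [e1, e2] at hW'
  dsimp only at hW
  have hexp : ((∑ i, u i * γ₁ i) + ∑ i, v i * γ₂ i) * τ =
      τ * (∑ i, u i * γ₁ i) + τ * (∑ i, v i * γ₂ i) := by ring
  rw [hexp]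
  linarith

lemma pairing_le_bound {u v γ₁ γ₂ : Fin N → ℝ} {M : ℝ}
    (hu : ∀ i, |u i| ≤ M) (hv : ∀ j, |v j| ≤ M) :
    |(∑ i, u i * γ₁ i) + ∑ i, v i * γ₂ i| ≤ M * ((∑ i, |γ₁ i|) + ∑ i, |γ₂ i|) := by
  calc |(∑ i, u i * γ₁ i) + ∑ i, v i * γ₂ i|
      ≤ |∑ i, u i * γ₁ i| + |∑ i, v i * γ₂ i| := abs_add_le _ _
    _ ≤ (∑ i, |u i * γ₁ i|) + ∑ i, |v i * γ₂ i| :=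
        add_le_add (Finset.abs_sum_le_sum_abs _ _) (Finset.abs_sum_le_sum_abs _ _)
    _ ≤ (∑ i, M * |γ₁ i|) + ∑ i, M * |γ₂ i| := by
        refine add_le_add (Finset.sum_le_sum fun i _ => ?_) (Finset.sum_le_sum fun i _ => ?_)
        · rw [abs_mul]; exact mul_le_mul_of_nonneg_right (hu i) (abs_nonneg _)
        · rw [abs_mul]; exact mul_le_mul_of_nonneg_right (hv i) (abs_nonneg _)
    _ = M * ((∑ i, |γ₁ i|) + ∑ i, |γ₂ i|) := by rw [mul_add, Finset.mul_sum, Finset.mul_sum]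

lemma diff_quot_bound (hN : 0 < N) {c : Fin N × Fin N → ℝ} {M : ℝ}
    (hc0 : ∀ ij, 0 ≤ c ij) (hcM : ∀ ij, c ij ≤ M) {r s γ₁ γ₂ : Fin N → ℝ} {τ : ℝ}
    (hτ : 0 < τ) (hr : r ∈ simplex N) (hs : s ∈ simplex N)
    (hr' : (r + τ • γ₁) ∈ simplex N) (hs' : (s + τ • γ₂) ∈ simplex N) :
    |(Wpp c (r + τ • γ₁) (s + τ • γ₂) - Wpp c r s) / τ| ≤
      M * ((∑ i, |γ₁ i|) + ∑ i, |γ₂ i|) := by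
  rw [abs_le]
  constructor
  · obtain ⟨⟨u, v⟩, huv⟩ := dual_nonempty hN hc0 hcM hr hs
    obtain ⟨u', v', hm, hub, hvb, _⟩ := dual_normalize hN hc0 hcM hr hs huv
    have hge := quot_ge_pairing hτ (simplex_subset_probVec hr') (simplex_subset_probVec hs')
      (u := u') (v := v') hm
    have habs := pairing_le_bound (γ₁ := γ₁) (γ₂ := γ₂) hub hvb
    have h1 := (abs_le.1 habs).1
    linarith
  · obtain ⟨⟨u, v⟩, huv⟩ := dual_nonempty hN hc0 hcM hr' hs'
    obtain ⟨u', v', hm, hub, hvb, _⟩ := dual_normalize hN hc0 hcM hr' hs' huv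
    have hle := quot_le_pairing hτ (simplex_subset_probVec hr) (simplex_subset_probVec hs)
      (u := u') (v := v') hm
    have habs := pairing_le_bound (γ₁ := γ₁) (γ₂ := γ₂) hub hvb
    have h1 := (abs_le.1 habs).2
    linarith

/-- The per-cost directional limit theorem. -/
lemma key_tendsto (hN : 0 < N) {c : Fin N × Fin N → ℝ} {M : ℝ}
    (hc0 : ∀ ij, 0 ≤ c ij) (hcM : ∀ ij, c ij ≤ M)
    {r s : Fin N → ℝ} (hr : r ∈ simplex N) (hs : s ∈ simplex N)
    {h₁ h₂ : Fin N → ℝ} (hh₁ : ∑ i, h₁ i = 0) (hh₂ : ∑ i, h₂ i = 0)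
    {t : ℕ → ℝ} {g₁ g₂ : ℕ → Fin N → ℝ}
    (ht0 : ∀ n, 0 < t n) (ht : Tendsto t atTop (𝓝 0))
    (hg₁ : Tendsto g₁ atTop (𝓝 h₁)) (hg₂ : Tendsto g₂ atTop (𝓝 h₂))
    (hmem : ∀ n, (r + t n • g₁ n) ∈ simplex N ∧ (s + t n • g₂ n) ∈ simplex N) :
    Tendsto (fun n => (Wpp c (r + t n • g₁ n) (s + t n • g₂ n) - Wpp c r s) / t n)
      atTop (𝓝 (sSup ((fun uv : (Fin N → ℝ) × (Fin N → ℝ) =>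
        (∑ i, uv.1 i * h₁ i) + ∑ i, uv.2 i * h₂ i) '' dualPairs c r s))) := by
  classical
  set Φ := sSup ((fun uv : (Fin N → ℝ) × (Fin N → ℝ) =>
    (∑ i, uv.1 i * h₁ i) + ∑ i, uv.2 i * h₂ i) '' dualPairs c r s) with hΦdef
  set D : ℕ → ℝ := fun n =>
    (Wpp c (r + t n • g₁ n) (s + t n • g₂ n) - Wpp c r s) / t n with hDdef
  have hdual0 : (dualPairs c r s).Nonempty := dual_nonempty hN hc0 hcM hr hs
  have hne : ((fun uv : (Fin N → ℝ) × (Fin N → ℝ) =>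
      (∑ i, uv.1 i * h₁ i) + ∑ i, uv.2 i * h₂ i) '' dualPairs c r s).Nonempty :=
    hdual0.image _
  have hbdd : BddAbove ((fun uv : (Fin N → ℝ) × (Fin N → ℝ) =>
      (∑ i, uv.1 i * h₁ i) + ∑ i, uv.2 i * h₂ i) '' dualPairs c r s) := by
    refine ⟨M * ((∑ i, |h₁ i|) + ∑ i, |h₂ i|), ?_⟩
    rintro y ⟨⟨u, v⟩, huv, rfl⟩
    exact dual_obj_bddAbove hN hc0 hcM hr hs hh₁ hh₂ huv
  have hlow : ∀ b < Φ, ∀ᶠ n in atTop, b < D n := by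
    intro b hb
    obtain ⟨y, hy, hby⟩ := exists_lt_of_lt_csSup hne hb
    obtain ⟨⟨u, v⟩, huv, rfl⟩ := hy
    have hDlb : ∀ n, (∑ i, u i * g₁ n i) + (∑ i, v i * g₂ n i) ≤ D n := fun n =>
      quot_ge_pairing (ht0 n) (simplex_subset_probVec (hmem n).1)
        (simplex_subset_probVec (hmem n).2) huv
    have hconv : Tendsto (fun n => (∑ i, u i * g₁ n i) + ∑ i, v i * g₂ n i) atTop
        (𝓝 ((∑ i, u i * h₁ i) + ∑ i, v i * h₂ i)) :=
      (pairing_tendsto tendsto_const_nhds hg₁).add (pairing_tendsto tendsto_const_nhds hg₂)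
    filter_upwards [hconv.eventually (eventually_gt_nhds hby)] with n hn
    exact lt_of_lt_of_le hn (hDlb n)
  -- choose normalized dual pairs at the perturbed marginals
  have hsel : ∀ n, ∃ uv : (Fin N → ℝ) × (Fin N → ℝ),
      uv ∈ dualPairs c (r + t n • g₁ n) (s + t n • g₂ n) ∧
      (∀ i, |uv.1 i| ≤ M) ∧ ∀ j, |uv.2 j| ≤ M := by
    intro n
    obtain ⟨⟨u, v⟩, huv⟩ := dual_nonempty hN hc0 hcM (hmem n).1 (hmem n).2
    obtain ⟨u', v', hm, hub, hvb, _⟩ := dual_normalize hN hc0 hcM (hmem n).1 (hmem n).2 huv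
    exact ⟨(u', v'), hm, hub, hvb⟩
  choose ν hν1 hν2 hν3 using hsel
  refine tendsto_of_subseq_tendsto fun ns hns => ?_
  have hbox : ∀ n, ν (ns n) ∈ Set.Icc
      ((fun _ => -M, fun _ => -M) : (Fin N → ℝ) × (Fin N → ℝ)) (fun _ => M, fun _ => M) := by
    intro n
    rw [Set.mem_Icc]
    exact ⟨⟨fun i => (abs_le.1 (hν2 (ns n) i)).1, fun i => (abs_le.1 (hν3 (ns n) i)).1⟩,
      ⟨fun i => (abs_le.1 (hν2 (ns n) i)).2, fun i => (abs_le.1 (hν3 (ns n) i)).2⟩⟩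
  obtain ⟨uvl, _, φk, hφmono, hφlim⟩ := (isCompact_Icc (a := ((fun _ => -M, fun _ => -M) :
    (Fin N → ℝ) × (Fin N → ℝ))) (b := (fun _ => M, fun _ => M))).tendsto_subseq hbox
  refine ⟨φk, ?_⟩
  set m : ℕ → ℕ := fun k => ns (φk k) with hmdef
  have hm : Tendsto m atTop atTop := hns.comp hφmono.tendsto_atTop
  have hνlim : Tendsto (fun k => ν (m k)) atTop (𝓝 uvl) := hφlim
  have hν1lim : Tendsto (fun k => (ν (m k)).1) atTop (𝓝 uvl.1) :=
    (continuous_fst.tendsto uvl).comp hνlim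
  have hν2lim : Tendsto (fun k => (ν (m k)).2) atTop (𝓝 uvl.2) :=
    (continuous_snd.tendsto uvl).comp hνlim
  have hrlim : Tendsto (fun k => r + t (m k) • g₁ (m k)) atTop (𝓝 r) := by
    have h0 : Tendsto (fun k => t (m k) • g₁ (m k)) atTop (𝓝 ((0:ℝ) • h₁)) :=
      (ht.comp hm).smul (hg₁.comp hm)
    have := tendsto_const_nhds (x := r) (f := atTop (α := ℕ)) |>.add h0
    simpa using this
  have hslim : Tendsto (fun k => s + t (m k) • g₂ (m k)) atTop (𝓝 s) := by
    have h0 : Tendsto (fun k => t (m k) • g₂ (m k)) atTop (𝓝 ((0:ℝ) • h₂)) :=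
      (ht.comp hm).smul (hg₂.comp hm)
    have := tendsto_const_nhds (x := s) (f := atTop (α := ℕ)) |>.add h0
    simpa using this
  -- the perturbed values tend to the value at (r,s)
  have habsb : ∀ n, |Wpp c (r + t n • g₁ n) (s + t n • g₂ n) - Wpp c r s| ≤
      t n * (M * ((∑ i, |g₁ n i|) + ∑ i, |g₂ n i|)) := by
    intro n
    have hb := diff_quot_bound hN hc0 hcM (ht0 n) hr hs (hmem n).1 (hmem n).2
    rw [abs_div, abs_of_pos (ht0 n), div_le_iff₀ (ht0 n)] at hb
    calc |Wpp c (r + t n • g₁ n) (s + t n • g₂ n) - Wpp c r s|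
        ≤ M * ((∑ i, |g₁ n i|) + ∑ i, |g₂ n i|) * t n := hb
      _ = t n * (M * ((∑ i, |g₁ n i|) + ∑ i, |g₂ n i|)) := by ring
  have habs1 : Tendsto (fun k => ∑ i, |g₁ (m k) i|) atTop (𝓝 (∑ i, |h₁ i|)) :=
    tendsto_finset_sum _ fun i _ =>
      ((tendsto_pi_nhds.1 (hg₁.comp hm) i)).abs
  have habs2 : Tendsto (fun k => ∑ i, |g₂ (m k) i|) atTop (𝓝 (∑ i, |h₂ i|)) :=
    tendsto_finset_sum _ fun i _ =>
      ((tendsto_pi_nhds.1 (hg₂.comp hm) i)).abs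
  have hWlim : Tendsto (fun k => Wpp c (r + t (m k) • g₁ (m k)) (s + t (m k) • g₂ (m k)))
      atTop (𝓝 (Wpp c r s)) := by
    have hb0 : Tendsto (fun k => t (m k) * (M * ((∑ i, |g₁ (m k) i|) + ∑ i, |g₂ (m k) i|)))
        atTop (𝓝 (0 * (M * ((∑ i, |h₁ i|) + ∑ i, |h₂ i|)))) :=
      (ht.comp hm).mul (tendsto_const_nhds.mul (habs1.add habs2))
    rw [zero_mul] at hb0
    have hsq := squeeze_zero_norm
      (f := fun k => Wpp c (r + t (m k) • g₁ (m k)) (s + t (m k) • g₂ (m k)) - Wpp c r s)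
      (fun k => by simpa [Real.norm_eq_abs] using habsb (m k)) hb0
    have := hsq.add (tendsto_const_nhds (x := Wpp c r s) (f := atTop (α := ℕ)))
    simpa using this
  -- the limit pair is an optimal dual pair at (r,s)
  have hldual : uvl ∈ dualPairs c r s := by
    constructor
    · have hobjk : ∀ k, ((∑ i, (ν (m k)).1 i * (r + t (m k) • g₁ (m k)) i) +
          ∑ i, (ν (m k)).2 i * (s + t (m k) • g₂ (m k)) i) =
          Wpp c (r + t (m k) • g₁ (m k)) (s + t (m k) • g₂ (m k)) := fun k => (hν1 (m k)).1
      have hlhs : Tendsto (fun k => (∑ i, (ν (m k)).1 i * (r + t (m k) • g₁ (m k)) i) +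
          ∑ i, (ν (m k)).2 i * (s + t (m k) • g₂ (m k)) i) atTop
          (𝓝 ((∑ i, uvl.1 i * r i) + ∑ i, uvl.2 i * s i)) :=
        (pairing_tendsto hν1lim hrlim).add (pairing_tendsto hν2lim hslim)
      have hrhs : Tendsto (fun k => (∑ i, (ν (m k)).1 i * (r + t (m k) • g₁ (m k)) i) +
          ∑ i, (ν (m k)).2 i * (s + t (m k) • g₂ (m k)) i) atTop (𝓝 (Wpp c r s)) := by
        simp only [hobjk]
        exact hWlim
      exact tendsto_nhds_unique hlhs hrhs
    · intro i j
      have hfk : ∀ k, (ν (m k)).1 i + (ν (m k)).2 j ≤ c (i, j) := fun k => (hν1 (m k)).2 i j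
      have hconv : Tendsto (fun k => (ν (m k)).1 i + (ν (m k)).2 j) atTop
          (𝓝 (uvl.1 i + uvl.2 j)) :=
        (tendsto_pi_nhds.1 hν1lim i).add (tendsto_pi_nhds.1 hν2lim j)
      exact le_of_tendsto hconv (Filter.Eventually.of_forall hfk)
  have hΦge : ((∑ i, uvl.1 i * h₁ i) + ∑ i, uvl.2 i * h₂ i) ≤ Φ :=
    le_csSup hbdd ⟨uvl, hldual, rfl⟩
  -- upper bound for the difference quotients along the subsequence
  have hub : ∀ k, D (m k) ≤ (∑ i, (ν (m k)).1 i * g₁ (m k) i) +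
      ∑ i, (ν (m k)).2 i * g₂ (m k) i := fun k =>
    quot_le_pairing (ht0 (m k)) (simplex_subset_probVec hr) (simplex_subset_probVec hs)
      (hν1 (m k))
  have hpairlim : Tendsto (fun k => (∑ i, (ν (m k)).1 i * g₁ (m k) i) +
      ∑ i, (ν (m k)).2 i * g₂ (m k) i) atTop
      (𝓝 ((∑ i, uvl.1 i * h₁ i) + ∑ i, uvl.2 i * h₂ i)) :=
    (pairing_tendsto hν1lim (hg₁.comp hm)).add (pairing_tendsto hν2lim (hg₂.comp hm))
  refine tendsto_order.2 ⟨fun b hb => ?_, fun b hb => ?_⟩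
  · exact hm.eventually (hlow b hb)
  · filter_upwards [hpairlim.eventually (eventually_lt_nhds (lt_of_le_of_lt hΦge hb))]
      with k hk
    exact lt_of_le_of_lt (hub k) hk

lemma eNorm_nonneg' {n : ℕ} (v : Fin n → ℝ) : 0 ≤ eNorm v := Real.sqrt_nonneg _

lemma eNorm_le_sum_abs {n : ℕ} (v : Fin n → ℝ) : eNorm v ≤ ∑ i, |v i| := by
  rw [eNorm]
  have h1 : ∑ i, v i ^ 2 = ∑ i, |v i| ^ 2 := by
    exact Finset.sum_congr rfl fun i _ => (sq_abs (v i)).symm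
  rw [h1]
  have h2 : ∑ i, |v i| ^ 2 ≤ (∑ i, |v i|) ^ 2 :=
    Finset.sum_sq_le_sq_sum_of_nonneg fun i _ => abs_nonneg _
  calc Real.sqrt (∑ i, |v i| ^ 2) ≤ Real.sqrt ((∑ i, |v i|) ^ 2) := Real.sqrt_le_sqrt h2
    _ = ∑ i, |v i| := Real.sqrt_sq (Finset.sum_nonneg fun i _ => abs_nonneg _)

lemma stiefel_entry_le {d k : ℕ} {E : Fin d → Fin k → ℝ} (hE : E ∈ Stiefel d k)
    (b : Fin d) (a : Fin k) : |E b a| ≤ 1 := by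
  have hdiag : ∑ b', E b' a * E b' a = 1 := by
    have h := congr_fun (congr_fun hE a) a
    simpa [Matrix.mul_apply, Matrix.one_apply] using h
  rw [abs_le_one_iff_mul_self_le_one]
  calc E b a * E b a ≤ ∑ b', E b' a * E b' a :=
        Finset.single_le_sum (fun b' _ => mul_self_nonneg (E b' a)) (Finset.mem_univ b)
    _ = 1 := hdiag

lemma proj_bound {d k : ℕ} {E : Fin d → Fin k → ℝ} (hE : E ∈ Stiefel d k) (z : Fin d → ℝ) :
    eNorm (proj E z) ≤ (k : ℝ) * ∑ b, |z b| := by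
  calc eNorm (proj E z) ≤ ∑ a, |proj E z a| := eNorm_le_sum_abs _
    _ ≤ ∑ _a : Fin k, ∑ b, |z b| := by
        refine Finset.sum_le_sum fun a _ => ?_
        calc |proj E z a| = |∑ b, E b a * z b| := rfl
          _ ≤ ∑ b, |E b a * z b| := Finset.abs_sum_le_sum_abs _ _
          _ ≤ ∑ b, |z b| := by
              refine Finset.sum_le_sum fun b _ => ?_
              rw [abs_mul]
              calc |E b a| * |z b| ≤ 1 * |z b| :=
                    mul_le_mul_of_nonneg_right (stiefel_entry_le hE b a) (abs_nonneg _)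
                _ = |z b| := one_mul _
    _ = (k : ℝ) * ∑ b, |z b| := by
        rw [Finset.sum_const, Finset.card_univ, Fintype.card_fin, nsmul_eq_mul]

/-- A uniform bound for all projected cost vectors. -/
def costBound (k : ℕ) {d N : ℕ} (x : Fin N → Fin d → ℝ) (p : ℝ) : ℝ :=
  ∑ ij : Fin N × Fin N, ((k : ℝ) * ∑ b, |(x ij.1 - x ij.2) b|) ^ p

lemma pcost_nonneg {d k N : ℕ} (x : Fin N → Fin d → ℝ) (E : Fin d → Fin k → ℝ) (p : ℝ)
    (ij : Fin N × Fin N) : 0 ≤ pcost x E p ij :=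
  Real.rpow_nonneg (eNorm_nonneg' _) p

lemma costBound_nonneg (k : ℕ) {d N : ℕ} (x : Fin N → Fin d → ℝ) (p : ℝ) :
    0 ≤ costBound k x p :=
  Finset.sum_nonneg fun ij _ => Real.rpow_nonneg (by positivity) _

lemma pcost_le_costBound {d k N : ℕ} (x : Fin N → Fin d → ℝ) {E : Fin d → Fin k → ℝ}
    (hE : E ∈ Stiefel d k) {p : ℝ} (hp : 0 ≤ p) (ij : Fin N × Fin N) :
    pcost x E p ij ≤ costBound k x p := by
  have h1 : pcost x E p ij ≤ ((k : ℝ) * ∑ b, |(x ij.1 - x ij.2) b|) ^ p :=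
    Real.rpow_le_rpow (eNorm_nonneg' _) (proj_bound hE _) hp
  refine h1.trans ?_
  rw [costBound]
  exact Finset.single_le_sum
    (f := fun ij' : Fin N × Fin N => ((k : ℝ) * ∑ b, |(x ij'.1 - x ij'.2) b|) ^ p)
    (fun ij' _ => Real.rpow_nonneg (by positivity) _) (Finset.mem_univ ij)

lemma continuous_pcost {d k N : ℕ} (x : Fin N → Fin d → ℝ) {p : ℝ} (hp : 0 ≤ p) :
    Continuous fun E : Fin d → Fin k → ℝ => pcost x E p := by
  refine continuous_pi fun ij => ?_
  have h1 : Continuous fun E : Fin d → Fin k → ℝ => eNorm (proj E (x ij.1 - x ij.2)) := by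
    unfold eNorm proj
    refine Real.continuous_sqrt.comp ?_
    refine continuous_finset_sum _ fun a _ => ?_
    refine Continuous.pow ?_ 2
    exact continuous_finset_sum _ fun b _ =>
      ((continuous_apply_apply b a).mul continuous_const)
  exact h1.rpow_const fun E => Or.inr hp

lemma Wpp_diff_le {c c' : Fin N × Fin N → ℝ} (hc0 : ∀ ij, 0 ≤ c ij) (hc0' : ∀ ij, 0 ≤ c' ij)
    {r s : Fin N → ℝ} (hr : r ∈ probVec N) (hs : s ∈ probVec N) :
    |Wpp c r s - Wpp c' r s| ≤ ∑ ij, |c ij - c' ij| := by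
  have key : ∀ c₁ c₂ : Fin N × Fin N → ℝ, (∀ ij, 0 ≤ c₁ ij) → (∀ ij, 0 ≤ c₂ ij) →
      Wpp c₁ r s ≤ Wpp c₂ r s + ∑ ij, |c₁ ij - c₂ ij| := by
    intro c₁ c₂ h₁ h₂
    have h : Wpp c₁ r s - ∑ ij, |c₁ ij - c₂ ij| ≤ Wpp c₂ r s := by
      refine le_Wpp hr hs fun π hπ => ?_
      have hπ1 : ∀ ij, π ij ≤ 1 := by
        intro ij
        have hle : π ij ≤ ∑ ij', π ij' :=
          Finset.single_le_sum (fun ij' _ => hπ.1 ij') (Finset.mem_univ ij)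
        rwa [plan_sum hπ, hr.2] at hle
      have h2 : ∑ ij, c₁ ij * π ij ≤ (∑ ij, c₂ ij * π ij) + ∑ ij, |c₁ ij - c₂ ij| := by
        rw [← Finset.sum_add_distrib]
        refine Finset.sum_le_sum fun ij _ => ?_
        have h3 : (c₁ ij - c₂ ij) * π ij ≤ |c₁ ij - c₂ ij| := by
          calc (c₁ ij - c₂ ij) * π ij ≤ |c₁ ij - c₂ ij| * π ij :=
                mul_le_mul_of_nonneg_right (le_abs_self _) (hπ.1 ij)
            _ ≤ |c₁ ij - c₂ ij| * 1 := mul_le_mul_of_nonneg_left (hπ1 ij) (abs_nonneg _)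
            _ = |c₁ ij - c₂ ij| := mul_one _
        nlinarith [h3]
      have h4 := Wpp_le_obj h₁ hπ
      linarith
    linarith
  rw [abs_sub_le_iff]
  constructor
  · have := key c c' hc0 hc0'
    linarith
  · have := key c' c hc0' hc0
    have heq : ∑ ij, |c' ij - c ij| = ∑ ij, |c ij - c' ij| :=
      Finset.sum_congr rfl fun ij _ => abs_sub_comm _ _
    linarith

lemma continuous_Wpp_pcost {d k N : ℕ} (x : Fin N → Fin d → ℝ) {p : ℝ} (hp : 0 ≤ p)
    {r s : Fin N → ℝ} (hr : r ∈ probVec N) (hs : s ∈ probVec N) :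
    Continuous fun E : Fin d → Fin k → ℝ => Wpp (pcost x E p) r s := by
  rw [continuous_iff_continuousAt]
  intro E₀
  have hG : Continuous fun E : Fin d → Fin k → ℝ =>
      ∑ ij, |pcost x E p ij - pcost x E₀ p ij| := by
    refine continuous_finset_sum _ fun ij _ => ?_
    exact (((continuous_apply ij).comp (continuous_pcost x hp)).sub continuous_const).abs
  have hbound : ∀ E : Fin d → Fin k → ℝ,
      dist (Wpp (pcost x E p) r s) (Wpp (pcost x E₀ p) r s) ≤
        ∑ ij, |pcost x E p ij - pcost x E₀ p ij| := by
    intro E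
    rw [Real.dist_eq]
    exact Wpp_diff_le (pcost_nonneg x E p) (pcost_nonneg x E₀ p) hr hs
  rw [ContinuousAt, tendsto_iff_dist_tendsto_zero]
  refine squeeze_zero (fun E => dist_nonneg) hbound ?_
  have h0 : Tendsto (fun E : Fin d → Fin k → ℝ =>
      ∑ ij, |pcost x E p ij - pcost x E₀ p ij|) (𝓝 E₀)
      (𝓝 (∑ ij : Fin N × Fin N, |pcost x E₀ p ij - pcost x E₀ p ij|)) := hG.continuousAt
  simpa using h0

lemma integrable_Wpp {d k N : ℕ} (x : Fin N → Fin d → ℝ) {p : ℝ} (hp : 0 ≤ p)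
    (μ : Measure (Stiefel d k)) [IsFiniteMeasure μ]
    {r s : Fin N → ℝ} (hr : r ∈ probVec N) (hs : s ∈ probVec N) :
    Integrable (fun E : Stiefel d k => Wpp (pcost x E.1 p) r s) μ := by
  have hcont : Continuous fun E : Stiefel d k => Wpp (pcost x E.1 p) r s :=
    (continuous_Wpp_pcost x hp hr hs).comp continuous_subtype_val
  refine ⟨hcont.measurable.aestronglyMeasurable, ?_⟩
  refine MeasureTheory.HasFiniteIntegral.of_bounded (C := costBound k x p)
    (Filter.Eventually.of_forall fun E => ?_)
  rw [Real.norm_eq_abs, abs_of_nonneg (Wpp_nonneg (pcost_nonneg x E.1 p) hr hs)]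
  exact Wpp_le (pcost_nonneg x E.1 p) (fun ij => pcost_le_costBound x E.2 hp ij) hr hs


end PRW

open MeasureTheory ProbabilityTheory Filter Topology Matrix PRW

/-- Directional Hadamard differentiability of `(r,s) ↦ IW_p^p(r,s)` on
`Δ_N × Δ_N` tangentially to `Ω_N × Ω_N`, with derivative
`(h₁,h₂) ↦ ∫ sup_{(u,v) ∈ Φ*_p(r,s;𝒳_E)} (⟨u,h₁⟩ + ⟨v,h₂⟩) dμ(E)`. -/
theorem IWpp_directional_hadamard {N d k : ℕ} (hN : 1 ≤ N) (hd : 1 ≤ d)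
    (hk : 1 ≤ k) (hkd : k ≤ d) (x : Fin N → Fin d → ℝ) (p : ℝ) (hp : 1 ≤ p)
    (μ : Measure (Stiefel d k)) [IsFiniteMeasure μ]
    (r s : Fin N → ℝ) (hr : r ∈ simplex N) (hs : s ∈ simplex N)
    (h₁ h₂ : Fin N → ℝ) (hh₁ : ∑ i, h₁ i = 0) (hh₂ : ∑ i, h₂ i = 0)
    (t : ℕ → ℝ) (g₁ g₂ : ℕ → Fin N → ℝ)
    (ht0 : ∀ n, 0 < t n) (ht : Tendsto t atTop (𝓝 0))
    (hg₁ : Tendsto g₁ atTop (𝓝 h₁)) (hg₂ : Tendsto g₂ atTop (𝓝 h₂))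
    (hmem : ∀ᶠ n in atTop,
      (r + t n • g₁ n) ∈ simplex N ∧ (s + t n • g₂ n) ∈ simplex N) :
    Tendsto (fun n =>
        (IWpp x μ p (r + t n • g₁ n) (s + t n • g₂ n) - IWpp x μ p r s) / t n)
      atTop
      (𝓝 (∫ E, sSup ((fun uv : (Fin N → ℝ) × (Fin N → ℝ) =>
          (∑ i, uv.1 i * h₁ i) + ∑ i, uv.2 i * h₂ i) ''
            dualPairs (pcost x E.1 p) r s) ∂μ)) := by
  classical
  have hp0 : (0:ℝ) ≤ p := zero_le_one.trans hp
  have hN0 : 0 < N := hN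
  obtain ⟨n₀, hn₀⟩ := Filter.eventually_atTop.1 hmem
  rw [← Filter.tendsto_add_atTop_iff_nat n₀]
  have hmem' : ∀ n, (r + t (n + n₀) • g₁ (n + n₀)) ∈ simplex N ∧
      (s + t (n + n₀) • g₂ (n + n₀)) ∈ simplex N := fun n => hn₀ (n + n₀) (Nat.le_add_left _ _)
  have hshift : Tendsto (fun n : ℕ => n + n₀) atTop atTop := tendsto_add_atTop_nat n₀
  set M := costBound k x p with hMdef
  have hM0 : 0 ≤ M := costBound_nonneg k x p
  have hA1 : Tendsto (fun n => (∑ i, |g₁ (n + n₀) i|) + ∑ i, |g₂ (n + n₀) i|) atTop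
      (𝓝 ((∑ i, |h₁ i|) + ∑ i, |h₂ i|)) := by
    have u1 : Tendsto (fun n => ∑ i, |g₁ (n + n₀) i|) atTop (𝓝 (∑ i, |h₁ i|)) :=
      tendsto_finset_sum _ fun i _ => (tendsto_pi_nhds.1 (hg₁.comp hshift) i).abs
    have u2 : Tendsto (fun n => ∑ i, |g₂ (n + n₀) i|) atTop (𝓝 (∑ i, |h₂ i|)) :=
      tendsto_finset_sum _ fun i _ => (tendsto_pi_nhds.1 (hg₂.comp hshift) i).abs
    exact u1.add u2
  obtain ⟨G, hG⟩ := hA1.bddAbove_range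
  have hGle : ∀ n, (∑ i, |g₁ (n + n₀) i|) + ∑ i, |g₂ (n + n₀) i| ≤ G := fun n =>
    hG (Set.mem_range_self n)
  have hG0 : 0 ≤ G := le_trans (by positivity) (hGle 0)
  set F : ℕ → Stiefel d k → ℝ := fun n E =>
    (Wpp (pcost x E.1 p) (r + t (n + n₀) • g₁ (n + n₀)) (s + t (n + n₀) • g₂ (n + n₀)) -
      Wpp (pcost x E.1 p) r s) / t (n + n₀) with hFdef
  have hmeas : ∀ n, AEStronglyMeasurable (F n) μ := by
    intro n
    have hcont : Continuous (F n) := by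
      refine Continuous.div_const ?_ _
      exact ((continuous_Wpp_pcost x hp0 (simplex_subset_probVec (hmem' n).1)
          (simplex_subset_probVec (hmem' n).2)).comp continuous_subtype_val).sub
        ((continuous_Wpp_pcost x hp0 (simplex_subset_probVec hr)
          (simplex_subset_probVec hs)).comp continuous_subtype_val)
    exact hcont.measurable.aestronglyMeasurable
  have hbound : ∀ n, ∀ᵐ E ∂μ, ‖F n E‖ ≤ M * G := by
    intro n
    refine Filter.Eventually.of_forall fun E => ?_
    rw [Real.norm_eq_abs]
    have hq := diff_quot_bound hN0 (pcost_nonneg x E.1 p)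
      (fun ij => pcost_le_costBound x E.2 hp0 ij) (ht0 (n + n₀)) hr hs (hmem' n).1 (hmem' n).2
    refine hq.trans ?_
    exact mul_le_mul_of_nonneg_left (hGle n) hM0
  have hlim : ∀ᵐ E ∂μ, Tendsto (fun n => F n E) atTop
      (𝓝 (sSup ((fun uv : (Fin N → ℝ) × (Fin N → ℝ) =>
        (∑ i, uv.1 i * h₁ i) + ∑ i, uv.2 i * h₂ i) '' dualPairs (pcost x E.1 p) r s))) := by
    refine Filter.Eventually.of_forall fun E => ?_
    exact key_tendsto hN0 (pcost_nonneg x E.1 p)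
      (fun ij => pcost_le_costBound x E.2 hp0 ij) hr hs hh₁ hh₂
      (t := fun n => t (n + n₀)) (g₁ := fun n => g₁ (n + n₀)) (g₂ := fun n => g₂ (n + n₀))
      (fun n => ht0 _) (ht.comp hshift) (hg₁.comp hshift) (hg₂.comp hshift) hmem'
  have hdct := MeasureTheory.tendsto_integral_of_dominated_convergence
    (bound := fun _ => M * G) hmeas (MeasureTheory.integrable_const _) hbound hlim
  refine Tendsto.congr (fun n => ?_) hdct
  show ∫ E, F n E ∂μ = _
  have hi1 := integrable_Wpp x hp0 μ (simplex_subset_probVec (hmem' n).1)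
    (simplex_subset_probVec (hmem' n).2)
  have hi2 := integrable_Wpp x hp0 μ (simplex_subset_probVec hr) (simplex_subset_probVec hs)
  rw [hFdef]
  rw [MeasureTheory.integral_div, MeasureTheory.integral_sub hi1 hi2]
  rfl
end
end

section
/- Let p be an even positive integer, λ > 0, and 1 ≤ k ≤ d. For every compact set K ⊆ Δ_N × Δ_N there exists a constant C ≥ 0 such that for all (r,s), (r',s') ∈ K, |PW_{p,λ}(r,s) − PW_{p,λ}(r',s')| ≤ C·‖(r,s) − (r',s')‖; that is, the map (r,s) ↦ PW_{p,λ}(r,s) is locally Lipschitz on Δ_N × Δ_N. -/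
open MeasureTheory ProbabilityTheory Filter Topology Matrix

noncomputable section

lemma scalar_mono (a b : ℝ) :
    min (Real.exp a) (Real.exp b) * (a - b)^2 ≤ (Real.exp a - Real.exp b) * (a - b) := by
  wlog h : b ≤ a generalizing a b
  · have h2 := this b a (le_of_not_ge h)
    rw [min_comm] at h2
    nlinarith [h2]
  · have h1 : Real.exp b * ((a - b) + 1) ≤ Real.exp a := by
      have h2 := Real.add_one_le_exp (a - b)
      have h3 : Real.exp b * Real.exp (a - b) = Real.exp a := by
        rw [← Real.exp_add]; ring_nf
      nlinarith [Real.exp_pos b]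
    have h2 : min (Real.exp a) (Real.exp b) ≤ Real.exp b := min_le_right _ _
    nlinarith [sq_nonneg (a - b), Real.exp_pos b, sub_nonneg.mpr h]

lemma scalar_lip {a b : ℝ} (ha : a ≤ 0) (hb : b ≤ 0) : |Real.exp a - Real.exp b| ≤ |a - b| := by
  wlog h : b ≤ a generalizing a b
  · rw [abs_sub_comm, abs_sub_comm a b]; exact this hb ha (le_of_not_ge h)
  · rw [abs_of_nonneg (sub_nonneg.mpr (Real.exp_le_exp.mpr h)), abs_of_nonneg (sub_nonneg.mpr h)]
    have h1 : Real.exp a * ((b - a) + 1) ≤ Real.exp b := by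
      have h2 := Real.add_one_le_exp (b - a)
      have h3 : Real.exp a * Real.exp (b - a) = Real.exp b := by
        rw [← Real.exp_add]; ring_nf
      nlinarith [Real.exp_pos a]
    have h2 : Real.exp a ≤ 1 := Real.exp_le_one_iff.mpr ha
    nlinarith [sub_nonneg.mpr h, Real.exp_pos a]

lemma cs_sum {N : ℕ} (f g : Fin N → ℝ) :
    ∑ i, f i * g i ≤ Real.sqrt (∑ i, f i ^ 2) * Real.sqrt (∑ i, g i ^ 2) := by
  have h := Finset.sum_mul_sq_le_sq_mul_sq Finset.univ f g
  calc ∑ i, f i * g i ≤ |∑ i, f i * g i| := le_abs_self _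
    _ = Real.sqrt ((∑ i, f i * g i) ^ 2) := (Real.sqrt_sq_eq_abs _).symm
    _ ≤ Real.sqrt ((∑ i, f i ^ 2) * ∑ i, g i ^ 2) := Real.sqrt_le_sqrt h
    _ = _ := Real.sqrt_mul (Finset.sum_nonneg fun i _ => sq_nonneg _) _

lemma rpow_diff_le {q g0 : ℝ} (hq : 0 < q) (hq1 : q ≤ 1) (hg0 : 0 < g0) :
    ∀ {a b : ℝ}, g0 ≤ a → g0 ≤ b → |a ^ q - b ^ q| ≤ q * g0 ^ (q - 1) * |a - b| := by
  have key : ∀ {a b : ℝ}, g0 ≤ a → g0 ≤ b → b ≤ a →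
      a ^ q - b ^ q ≤ q * g0 ^ (q - 1) * (a - b) := by
    intro a b ha hb hba
    rcases eq_or_lt_of_le hba with h | h
    · subst h; norm_num
    · obtain ⟨ζ, hζ, hslope⟩ := exists_hasDerivAt_eq_slope (fun x => x ^ q)
        (fun x => q * x ^ (q - 1)) h
        (by
          intro y hy
          exact (Real.continuousAt_rpow_const y q
            (Or.inl (ne_of_gt (lt_of_lt_of_le hg0 (le_trans hb hy.1))))).continuousWithinAt)
        (by
          intro y hy
          exact Real.hasDerivAt_rpow_const
            (Or.inl (ne_of_gt (lt_of_lt_of_le hg0 (le_of_lt (lt_of_le_of_lt hb hy.1))))))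
      have hζ0 : g0 ≤ ζ := le_of_lt (lt_of_le_of_lt hb hζ.1)
      have hle : ζ ^ (q - 1) ≤ g0 ^ (q - 1) :=
        Real.rpow_le_rpow_of_nonpos hg0 hζ0 (by linarith)
      have hab : a ^ q - b ^ q = q * ζ ^ (q - 1) * (a - b) := by
        rw [eq_div_iff (sub_ne_zero.mpr (ne_of_gt h))] at hslope
        linarith [hslope]
      rw [hab]
      have := mul_le_mul_of_nonneg_left hle (le_of_lt hq)
      nlinarith [sub_nonneg.mpr hba]
  intro a b ha hb
  rcases le_total b a with h | h
  · have h1 : b ^ q ≤ a ^ q := Real.rpow_le_rpow (by linarith) h (le_of_lt hq)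
    rw [abs_of_nonneg (sub_nonneg.mpr h1), abs_of_nonneg (sub_nonneg.mpr h)]
    exact key ha hb h
  · have h1 : a ^ q ≤ b ^ q := Real.rpow_le_rpow (by linarith) h (le_of_lt hq)
    rw [abs_sub_comm, abs_sub_comm a b,
      abs_of_nonneg (sub_nonneg.mpr h1), abs_of_nonneg (sub_nonneg.mpr h)]
    exact key hb ha h

open PRW

namespace PWproof

variable {N : ℕ}

lemma planSet_sum_one {r s : Fin N → ℝ} (hr : ∑ i, r i = 1)
    {π : Fin N × Fin N → ℝ} (hπ : π ∈ planSet N r s) : ∑ ij, π ij = 1 := by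
  rw [Fintype.sum_prod_type]
  calc ∑ i, ∑ j, π (i, j) = ∑ i, r i := Finset.sum_congr rfl fun i _ => hπ.2.1 i
    _ = 1 := hr

lemma planSet_le_one {r s : Fin N → ℝ} (hr : r ∈ probVec N)
    {π : Fin N × Fin N → ℝ} (hπ : π ∈ planSet N r s) : ∀ ij, π ij ≤ 1 := by
  rintro ⟨i, j⟩
  have h1 : π (i, j) ≤ ∑ j', π (i, j') :=
    Finset.single_le_sum (fun j' _ => hπ.1 (i, j')) (Finset.mem_univ j)
  have h2 : r i ≤ ∑ i', r i' := by
    refine Finset.single_le_sum (fun i' _ => ?_) (Finset.mem_univ i)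
    have := hπ.2.1 i'
    calc (0:ℝ) ≤ ∑ j', π (i', j') := Finset.sum_nonneg fun j' _ => hπ.1 (i', j')
      _ = r i' := hπ.2.1 i'
  rw [hπ.2.1 i] at h1
  rw [hr.2] at h2
  linarith

lemma plan_pos (c : Fin N × Fin N → ℝ) {lam : ℝ} (hlam : 0 < lam)
    {r s : Fin N → ℝ} (hr : r ∈ simplex N) (hs : s ∈ simplex N)
    {π : Fin N × Fin N → ℝ} (hπ : π ∈ planSet N r s)
    (hmin : ∀ π' ∈ planSet N r s, entObj c lam π ≤ entObj c lam π') :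
    ∀ ij, 0 < π ij := by
  intro ab
  rcases lt_or_eq_of_le (hπ.1 ab) with h | h
  · exact h
  exfalso
  set σ : Fin N × Fin N → ℝ := fun ij => r ij.1 * s ij.2 with hσdef
  have hσpos : ∀ ij, 0 < σ ij := fun ij => mul_pos (hr.1 ij.1) (hs.1 ij.2)
  have hσplan : σ ∈ planSet N r s := by
    refine ⟨fun ij => (hσpos ij).le, fun i => ?_, fun j => ?_⟩
    · simp only [hσdef]
      rw [← Finset.mul_sum, hs.2, mul_one]
    · simp only [hσdef]
      rw [← Finset.sum_mul, hr.2, one_mul]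
  set B : ℝ := (∑ ij, c ij * (σ ij - π ij)) + lam * (∑ ij,
      ((σ ij * Real.log (σ ij) - σ ij + 1) - (π ij * Real.log (π ij) - π ij + 1))) with hBdef
  have key : ∀ t : ℝ, 0 < t → t < 1 →
      entObj c lam (fun ij => (1 - t) * π ij + t * σ ij) ≤
        entObj c lam π + t * B + lam * (t * σ ab * Real.log t) := by
    intro t ht0 ht1
    have hconv : ∀ ij : Fin N × Fin N,
        ((1-t) * π ij + t * σ ij) * Real.log ((1-t) * π ij + t * σ ij) ≤
          (1-t) * (π ij * Real.log (π ij)) + t * (σ ij * Real.log (σ ij)) := by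
      intro ij
      have := Real.convexOn_mul_log.2 (Set.mem_Ici.mpr (hπ.1 ij))
        (Set.mem_Ici.mpr (hσpos ij).le) (show (0:ℝ) ≤ 1 - t by linarith)
        (le_of_lt ht0) (show (1 - t) + t = 1 by ring)
      simpa [smul_eq_mul] using this
    have hterm : ∀ ij : Fin N × Fin N,
        ((1-t) * π ij + t * σ ij) * Real.log ((1-t) * π ij + t * σ ij)
          - ((1-t) * π ij + t * σ ij) + 1 ≤
        (π ij * Real.log (π ij) - π ij + 1)
          + ((σ ij * Real.log (σ ij) - σ ij + 1) - (π ij * Real.log (π ij) - π ij + 1)) * t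
          + (if ij = ab then t * σ ab * Real.log t else 0) := by
      intro ij
      by_cases hij : ij = ab
      · subst hij
        rw [if_pos rfl, ← h]
        have hlogmul : Real.log (t * σ ij) = Real.log t + Real.log (σ ij) :=
          Real.log_mul (ne_of_gt ht0) (ne_of_gt (hσpos ij))
        have : (1 - t) * 0 + t * σ ij = t * σ ij := by ring
        rw [this, hlogmul]
        have h0 : (0:ℝ) * Real.log 0 = 0 := by simp
        rw [h0]
        apply le_of_eq
        ring
      · rw [if_neg hij]
        have hc := hconv ij
        nlinarith [hc]
    have hent : ent (fun ij => (1-t) * π ij + t * σ ij) ≤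
        ent π + t * (∑ ij, ((σ ij * Real.log (σ ij) - σ ij + 1)
          - (π ij * Real.log (π ij) - π ij + 1))) + t * σ ab * Real.log t := by
      unfold ent
      calc ∑ ij, (((1-t) * π ij + t * σ ij) * Real.log ((1-t) * π ij + t * σ ij)
            - ((1-t) * π ij + t * σ ij) + 1)
          ≤ ∑ ij, ((π ij * Real.log (π ij) - π ij + 1)
            + ((σ ij * Real.log (σ ij) - σ ij + 1) - (π ij * Real.log (π ij) - π ij + 1)) * t
            + (if ij = ab then t * σ ab * Real.log t else 0)) :=
            Finset.sum_le_sum fun ij _ => hterm ij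
        _ = _ := by
            rw [Finset.sum_add_distrib, Finset.sum_add_distrib, ← Finset.sum_mul,
              Finset.sum_ite_eq' Finset.univ ab (fun _ => t * σ ab * Real.log t),
              if_pos (Finset.mem_univ ab)]
            ring
    have hS1 : ∑ ij, c ij * ((1-t) * π ij + t * σ ij) =
        (∑ ij, c ij * π ij) + t * ∑ ij, c ij * (σ ij - π ij) := by
      have he : ∀ ij : Fin N × Fin N, c ij * ((1-t) * π ij + t * σ ij)
          = c ij * π ij + (c ij * (σ ij - π ij)) * t := fun ij => by ring
      rw [Finset.sum_congr rfl fun ij _ => he ij, Finset.sum_add_distrib, ← Finset.sum_mul]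
      ring
    unfold entObj
    rw [hS1, hBdef]
    nlinarith [mul_le_mul_of_nonneg_left hent hlam.le]
  set t : ℝ := min (Real.exp (-(|B| + 1) / (lam * σ ab))) (1/2) with htdef
  have ht0 : 0 < t := lt_min (Real.exp_pos _) (by norm_num)
  have ht1 : t < 1 := lt_of_le_of_lt (min_le_right _ _) (by norm_num)
  have hσab := hσpos ab
  have hlog : Real.log t ≤ -(|B| + 1) / (lam * σ ab) := by
    calc Real.log t ≤ Real.log (Real.exp (-(|B| + 1) / (lam * σ ab))) :=
          Real.log_le_log ht0 (min_le_left _ _)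
      _ = _ := Real.log_exp _
  have hplan_t : (fun ij => (1 - t) * π ij + t * σ ij) ∈ planSet N r s := by
    refine ⟨fun ij => ?_, fun i => ?_, fun j => ?_⟩
    · show (0:ℝ) ≤ (1 - t) * π ij + t * σ ij
      have h5 : 0 ≤ (1 - t) * π ij := mul_nonneg (by linarith) (hπ.1 ij)
      have h6 : 0 ≤ t * σ ij := mul_nonneg ht0.le (hσpos ij).le
      linarith
    · rw [Finset.sum_add_distrib, ← Finset.mul_sum, ← Finset.mul_sum, hπ.2.1 i, hσplan.2.1 i]
      ring
    · rw [Finset.sum_add_distrib, ← Finset.mul_sum, ← Finset.mul_sum, hπ.2.2 j, hσplan.2.2 j]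
      ring
  have hmin_t := hmin _ hplan_t
  have hkey := key t ht0 ht1
  have h1 : lam * (t * σ ab * Real.log t) ≤ t * (-(|B| + 1)) := by
    have h3 : (lam * σ ab) * (-(|B| + 1) / (lam * σ ab)) = -(|B| + 1) := by
      field_simp
    have h2 : lam * σ ab * Real.log t ≤ -(|B| + 1) := by
      calc lam * σ ab * Real.log t ≤ (lam * σ ab) * (-(|B| + 1) / (lam * σ ab)) :=
            mul_le_mul_of_nonneg_left hlog (le_of_lt (mul_pos hlam hσab))
        _ = -(|B| + 1) := h3
    calc lam * (t * σ ab * Real.log t) = t * (lam * σ ab * Real.log t) := by ring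
      _ ≤ t * (-(|B| + 1)) := mul_le_mul_of_nonneg_left h2 ht0.le
  have h4 : t * B ≤ t * |B| := mul_le_mul_of_nonneg_left (le_abs_self B) ht0.le
  linarith

end PWproof

namespace PWproof

variable {N : ℕ}

lemma exists_potentials (hN : 1 ≤ N) (c : Fin N × Fin N → ℝ) {lam : ℝ} (hlam : 0 < lam)
    {r s : Fin N → ℝ} {π : Fin N × Fin N → ℝ} (hπ : π ∈ planSet N r s)
    (hpos : ∀ ij, 0 < π ij)
    (hmin : ∀ π' ∈ planSet N r s, entObj c lam π ≤ entObj c lam π') :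
    ∃ u v : Fin N → ℝ, (∑ i, u i) = 0 ∧
      ∀ i j, lam * Real.log (π (i, j)) = u i + v j - c (i, j) := by
  set q : Fin N × Fin N → ℝ := fun ij => c ij + lam * Real.log (π ij) with hqdef
  have hq4 : ∀ i j i' j', q (i, j) + q (i', j') = q (i, j') + q (i', j) := by
    intro i j i' j'
    by_cases hii : i = i'
    · subst hii; ring
    by_cases hjj : j = j'
    · subst hjj; ring
    set δ : Fin N → Fin N → ℝ := fun a b => if b = a then (1:ℝ) else 0 with hδdef
    set hv : Fin N × Fin N → ℝ :=
      fun kl => (δ i kl.1 - δ i' kl.1) * (δ j kl.2 - δ j' kl.2) with hhdef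
    have hδsum : ∀ a : Fin N, ∑ b, δ a b = 1 := by
      intro a; simp [hδdef]
    have hδq : ∀ (a : Fin N) (g : Fin N → ℝ), ∑ b, δ a b * g b = g a := by
      intro a g
      simp only [hδdef, ite_mul, one_mul, zero_mul]
      rw [Finset.sum_ite_eq' Finset.univ a g, if_pos (Finset.mem_univ a)]
    have hδbound : ∀ a a' b : Fin N, a ≠ a' → |δ a b - δ a' b| ≤ 1 := by
      intro a a' b hne
      by_cases h1 : b = a
      · have h2 : ¬ b = a' := fun h2 => hne (by rw [← h1, h2])
        simp [hδdef, h1, h2, hne]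
      · by_cases h2 : b = a'
        · simp [hδdef, h1, h2, Ne.symm hne]
        · simp [hδdef, h1, h2]
    have hhrow : ∀ k, ∑ l, hv (k, l) = 0 := by
      intro k
      simp only [hhdef]
      rw [← Finset.mul_sum]
      have hz : ∑ l, (δ j l - δ j' l) = 0 := by
        rw [Finset.sum_sub_distrib, hδsum j, hδsum j']; ring
      rw [hz, mul_zero]
    have hhcol : ∀ l, ∑ k, hv (k, l) = 0 := by
      intro l
      simp only [hhdef]
      rw [← Finset.sum_mul]
      have hz : ∑ k, (δ i k - δ i' k) = 0 := by
        rw [Finset.sum_sub_distrib, hδsum i, hδsum i']; ring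
      rw [hz, zero_mul]
    have hhbound : ∀ kl, |hv kl| ≤ 1 := by
      intro kl
      simp only [hhdef]
      rw [abs_mul]
      exact mul_le_one₀ (hδbound i i' _ hii) (abs_nonneg _) (hδbound j j' _ hjj)
    have hne : (Finset.univ : Finset (Fin N × Fin N)).Nonempty := by
      haveI : NeZero N := ⟨by omega⟩
      exact Finset.univ_nonempty
    set ε : ℝ := Finset.univ.inf' hne π with hεdef
    have hε0 : 0 < ε := by
      rw [hεdef, Finset.lt_inf'_iff]
      exact fun ij _ => hpos ij
    set F : ℝ → ℝ := fun t => entObj c lam (fun kl => π kl + t * hv kl) with hFdef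
    have hlocal : IsLocalMin F 0 := by
      have hF00 : F 0 = entObj c lam π := by
        simp only [hFdef, zero_mul, add_zero]
      unfold IsLocalMin IsMinFilter
      rw [Metric.eventually_nhds_iff]
      refine ⟨ε, hε0, fun t ht => ?_⟩
      rw [Real.dist_eq, sub_zero] at ht
      have hplan_t : (fun kl => π kl + t * hv kl) ∈ planSet N r s := by
        refine ⟨fun kl => ?_, fun i2 => ?_, fun j2 => ?_⟩
        · show (0:ℝ) ≤ π kl + t * hv kl
          have h1 : |t * hv kl| ≤ |t| := by
            rw [abs_mul]
            nlinarith [hhbound kl, abs_nonneg t]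
          have h2 : ε ≤ π kl := Finset.inf'_le _ (Finset.mem_univ kl)
          have h3 := (abs_le.mp h1).1
          have h4 := le_of_lt ht
          linarith
        · show ∑ l, (π (i2, l) + t * hv (i2, l)) = r i2
          rw [Finset.sum_add_distrib, hπ.2.1 i2, ← Finset.mul_sum, hhrow, mul_zero, add_zero]
        · show ∑ k, (π (k, j2) + t * hv (k, j2)) = s j2
          rw [Finset.sum_add_distrib, hπ.2.2 j2, ← Finset.mul_sum, hhcol, mul_zero, add_zero]
      rw [hF00]
      exact hmin _ hplan_t
    have hderiv : HasDerivAt F (∑ kl, hv kl * q kl) 0 := by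
      have hterm : ∀ kl : Fin N × Fin N, HasDerivAt (fun t => c kl * (π kl + t * hv kl) +
          lam * ((π kl + t * hv kl) * Real.log (π kl + t * hv kl) - (π kl + t * hv kl) + 1))
          (hv kl * q kl) 0 := by
        intro kl
        have hy : HasDerivAt (fun t : ℝ => π kl + t * hv kl) (hv kl) 0 := by
          simpa using ((hasDerivAt_id (0:ℝ)).mul_const (hv kl)).const_add (π kl)
        have hlog : HasDerivAt (fun y : ℝ => y * Real.log y) (Real.log (π kl) + 1) (π kl) :=
          Real.hasDerivAt_mul_log (ne_of_gt (hpos kl))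
        have houter : HasDerivAt (fun y : ℝ => c kl * y + lam * (y * Real.log y - y + 1))
            (c kl + lam * (Real.log (π kl) + 1 - 1)) (π kl) := by
          have h9 := ((hasDerivAt_id (π kl)).const_mul (c kl)).add
            ((((hlog.sub (hasDerivAt_id (π kl))).add_const 1)).const_mul lam)
          exact h9.congr_deriv (by ring)
        have hy0 : π kl = (fun t : ℝ => π kl + t * hv kl) 0 := by simp
        rw [hy0] at houter
        have h7 : HasDerivAt (fun t => c kl * (π kl + t * hv kl) +
            lam * ((π kl + t * hv kl) * Real.log (π kl + t * hv kl) - (π kl + t * hv kl) + 1))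
            ((c kl + lam * (Real.log (π kl) + 1 - 1)) * hv kl) 0 := by
          refine (houter.comp 0 hy).congr_deriv ?_
          simp
        have h8 : (c kl + lam * (Real.log (π kl) + 1 - 1)) * hv kl = hv kl * q kl := by
          rw [hqdef]; ring
        rw [← h8]
        exact h7
      have hsum := HasDerivAt.fun_sum (fun kl (_ : kl ∈ Finset.univ) => hterm kl)
      have hFeq : F = fun t => ∑ kl, (c kl * (π kl + t * hv kl) +
          lam * ((π kl + t * hv kl) * Real.log (π kl + t * hv kl) - (π kl + t * hv kl) + 1)) := by
        funext t
        simp only [hFdef, entObj, ent]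
        rw [Finset.mul_sum, ← Finset.sum_add_distrib]
      rw [hFeq]
      exact hsum
    have hzero := hlocal.hasDerivAt_eq_zero hderiv
    have hexp : ∑ kl : Fin N × Fin N, hv kl * q kl =
        q (i, j) - q (i, j') - q (i', j) + q (i', j') := by
      rw [Fintype.sum_prod_type]
      have hinner : ∀ k, ∑ l, hv (k, l) * q (k, l) =
          (δ i k - δ i' k) * (q (k, j) - q (k, j')) := by
        intro k
        simp only [hhdef]
        have he : ∀ l, (δ i k - δ i' k) * (δ j l - δ j' l) * q (k, l) =
            (δ i k - δ i' k) * ((δ j l * q (k, l)) - (δ j' l * q (k, l))) := fun l => by ring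
        rw [Finset.sum_congr rfl fun l _ => he l, ← Finset.mul_sum]
        congr 1
        rw [Finset.sum_sub_distrib, hδq j (fun l => q (k, l)), hδq j' (fun l => q (k, l))]
      rw [Finset.sum_congr rfl fun k _ => hinner k]
      have he2 : ∀ k, (δ i k - δ i' k) * (q (k, j) - q (k, j')) =
          (δ i k * (q (k, j) - q (k, j'))) - (δ i' k * (q (k, j) - q (k, j'))) := fun k => by ring
      rw [Finset.sum_congr rfl fun k _ => he2 k, Finset.sum_sub_distrib,
        hδq i (fun k => q (k, j) - q (k, j')), hδq i' (fun k => q (k, j) - q (k, j'))]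
      ring
    rw [hexp] at hzero
    linarith
  set i0 : Fin N := ⟨0, hN⟩ with hi0
  set u : Fin N → ℝ := fun i => q (i, i0) with hu
  set v : Fin N → ℝ := fun j => q (i0, j) - q (i0, i0) with hvv
  have huv : ∀ i j, q (i, j) = u i + v j := by
    intro i j
    have h4 := hq4 i j i0 i0
    simp only [hu, hvv]
    linarith
  set μ : ℝ := (∑ i, u i) / N with hμ
  refine ⟨fun i => u i - μ, fun j => v j + μ, ?_, ?_⟩
  · rw [Finset.sum_sub_distrib, Finset.sum_const, Finset.card_univ, Fintype.card_fin,
      nsmul_eq_mul, hμ]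
    have hNne : (N : ℝ) ≠ 0 := Nat.cast_ne_zero.mpr (by omega)
    field_simp
    ring
  · intro i j
    have h5 := huv i j
    have h6 : q (i, j) = c (i, j) + lam * Real.log (π (i, j)) := rfl
    rw [h6] at h5
    show lam * Real.log (π (i, j)) = (u i - μ) + (v j + μ) - c (i, j)
    linarith

end PWproof

namespace PWproof

variable {N : ℕ}

lemma plan_lb (c : Fin N × Fin N → ℝ) {lam Mc : ℝ} (hlam : 0 < lam)
    (hc0 : ∀ ij, 0 ≤ c ij) (hcM : ∀ ij, c ij ≤ Mc)
    {r s : Fin N → ℝ} {π : Fin N × Fin N → ℝ} (hπ : π ∈ planSet N r s)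
    (hsum : ∑ ij, π ij = 1) (hpos : ∀ ij, 0 < π ij)
    {u v : Fin N → ℝ} (hrep : ∀ i j, lam * Real.log (π (i, j)) = u i + v j - c (i, j)) :
    ∀ i j, Real.exp (-(2 * Mc) / lam) * (r i * s j) ≤ π (i, j) := by
  set A : Fin N → Fin N → ℝ := fun i j => (u i + v j - c (i, j)) / lam with hA
  have hπA : ∀ i j, π (i, j) = Real.exp (A i j) := by
    intro i j
    have h1 : Real.log (π (i, j)) = A i j := by
      simp only [hA]
      field_simp
      linarith [hrep i j]
    rw [← h1, Real.exp_log (hpos (i, j))]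
  intro i j
  have key : ∀ i' j', Real.exp (-(2 * Mc) / lam) * (π (i, j') * π (i', j)) ≤
      π (i, j) * π (i', j') := by
    intro i' j'
    rw [hπA i j', hπA i' j, hπA i j, hπA i' j', ← Real.exp_add, ← Real.exp_add, ← Real.exp_add]
    apply Real.exp_le_exp.mpr
    simp only [hA]
    rw [← add_div, ← add_div, ← add_div, div_le_div_iff_of_pos_right hlam]
    have h1 := hc0 (i, j')
    have h2 := hc0 (i', j)
    have h3 := hcM (i, j)
    have h4 := hcM (i', j')
    linarith
  have hL : ∑ kl : Fin N × Fin N, Real.exp (-(2 * Mc) / lam) * (π (i, kl.2) * π (kl.1, j)) =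
      Real.exp (-(2 * Mc) / lam) * (r i * s j) := by
    rw [← Finset.mul_sum]
    congr 1
    rw [Fintype.sum_prod_type]
    have he : ∀ k, ∑ l, π (i, l) * π (k, j) = r i * π (k, j) := by
      intro k; rw [← Finset.sum_mul, hπ.2.1 i]
    rw [Finset.sum_congr rfl fun k _ => he k, ← Finset.mul_sum, hπ.2.2 j]
  have hR : ∑ kl : Fin N × Fin N, π (i, j) * π (kl.1, kl.2) = π (i, j) := by
    rw [← Finset.mul_sum]
    rw [Finset.sum_congr rfl (fun kl _ => by rw [Prod.mk.eta] : ∀ kl ∈ Finset.univ,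
      π (kl.1, kl.2) = π kl), hsum, mul_one]
  calc Real.exp (-(2 * Mc) / lam) * (r i * s j)
      = ∑ kl : Fin N × Fin N, Real.exp (-(2 * Mc) / lam) * (π (i, kl.2) * π (kl.1, j)) := hL.symm
    _ ≤ ∑ kl : Fin N × Fin N, π (i, j) * π (kl.1, kl.2) :=
        Finset.sum_le_sum fun kl _ => key kl.1 kl.2
    _ = π (i, j) := hR

end PWproof

namespace PWproof

variable {N : ℕ}

lemma stab (hN : 1 ≤ N) (c : Fin N × Fin N → ℝ) {lam Mc ρ : ℝ} (hlam : 0 < lam)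
    (hρ : 0 < ρ) (hMc0 : 0 ≤ Mc) (hc0 : ∀ ij, 0 ≤ c ij) (hcM : ∀ ij, c ij ≤ Mc)
    {r s r' s' : Fin N → ℝ} {π π' : Fin N × Fin N → ℝ}
    (hπ : π ∈ planSet N r s) (hπ' : π' ∈ planSet N r' s')
    (h1 : ∀ ij, π ij ≤ 1) (h1' : ∀ ij, π' ij ≤ 1)
    (hlb : ∀ ij, ρ ≤ π ij) (hlb' : ∀ ij, ρ ≤ π' ij)
    {u v u' v' : Fin N → ℝ}
    (hrep : ∀ ij : Fin N × Fin N, lam * Real.log (π ij) = u ij.1 + v ij.2 - c ij)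
    (hrep' : ∀ ij : Fin N × Fin N, lam * Real.log (π' ij) = u' ij.1 + v' ij.2 - c ij)
    (hu0 : ∑ i, u i = 0) (hu0' : ∑ i, u' i = 0) :
    |(∑ ij, c ij * π ij) - ∑ ij, c ij * π' ij| ≤
      (4 * Mc * N / ρ) * prodNorm (r - r') (s - s') := by
  have hlne : lam ≠ 0 := ne_of_gt hlam
  have hN0 : (0:ℝ) < N := by exact_mod_cast (by omega : 0 < N)
  set ξ : Fin N → ℝ := fun i => u i - u' i with hξdef
  set η : Fin N → ℝ := fun j => v j - v' j with hηdef
  set A : Fin N × Fin N → ℝ := fun ij => (u ij.1 + v ij.2 - c ij) / lam with hAdef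
  set A' : Fin N × Fin N → ℝ := fun ij => (u' ij.1 + v' ij.2 - c ij) / lam with hA'def
  have hπA : ∀ ij, π ij = Real.exp (A ij) := by
    intro ij
    have hl : Real.log (π ij) = A ij := by
      simp only [hAdef]
      field_simp
      linarith [hrep ij]
    rw [← hl, Real.exp_log (lt_of_lt_of_le hρ (hlb ij))]
  have hπA' : ∀ ij, π' ij = Real.exp (A' ij) := by
    intro ij
    have hl : Real.log (π' ij) = A' ij := by
      simp only [hA'def]
      field_simp
      linarith [hrep' ij]
    rw [← hl, Real.exp_log (lt_of_lt_of_le hρ (hlb' ij))]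
  have hA0 : ∀ ij, A ij ≤ 0 := fun ij =>
    Real.exp_le_one_iff.mp (by rw [← hπA ij]; exact h1 ij)
  have hA0' : ∀ ij, A' ij ≤ 0 := fun ij =>
    Real.exp_le_one_iff.mp (by rw [← hπA' ij]; exact h1' ij)
  have hAd : ∀ ij : Fin N × Fin N, A ij - A' ij = (ξ ij.1 + η ij.2) / lam := by
    intro ij
    simp only [hAdef, hA'def, hξdef, hηdef]
    ring
  have hξ0 : ∑ i, ξ i = 0 := by
    simp only [hξdef]
    rw [Finset.sum_sub_distrib, hu0, hu0']
    ring
  -- pointwise monotonicity inequality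
  have key : ∀ ij : Fin N × Fin N,
      (ρ / lam) * (ξ ij.1 + η ij.2)^2 ≤ (π ij - π' ij) * (ξ ij.1 + η ij.2) := by
    intro ij
    have hm := scalar_mono (A ij) (A' ij)
    rw [← hπA ij, ← hπA' ij] at hm
    have hmin : ρ ≤ min (π ij) (π' ij) := le_min (hlb ij) (hlb' ij)
    rw [hAd ij] at hm
    have h2 : ρ * ((ξ ij.1 + η ij.2) / lam)^2 ≤ (π ij - π' ij) * ((ξ ij.1 + η ij.2) / lam) :=
      le_trans (mul_le_mul_of_nonneg_right hmin (sq_nonneg _)) hm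
    have h3 := mul_le_mul_of_nonneg_left h2 hlam.le
    calc (ρ / lam) * (ξ ij.1 + η ij.2)^2
        = lam * (ρ * ((ξ ij.1 + η ij.2) / lam)^2) := by field_simp
      _ ≤ lam * ((π ij - π' ij) * ((ξ ij.1 + η ij.2) / lam)) := h3
      _ = (π ij - π' ij) * (ξ ij.1 + η ij.2) := by field_simp
  -- pairing identity
  have hpair : ∑ ij : Fin N × Fin N, (π ij - π' ij) * (ξ ij.1 + η ij.2) =
      (∑ i, ξ i * (r i - r' i)) + ∑ j, η j * (s j - s' j) := by
    have hsplit : ∀ i, ∑ j, (π (i, j) - π' (i, j)) * (ξ i + η j) =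
        ξ i * (r i - r' i) + ∑ j, η j * (π (i, j) - π' (i, j)) :=
      fun i =>
      calc ∑ j, (π (i, j) - π' (i, j)) * (ξ i + η j)
          = ∑ j, (ξ i * (π (i, j) - π' (i, j)) + η j * (π (i, j) - π' (i, j))) :=
            Finset.sum_congr rfl fun j _ => by ring
        _ = (∑ j, ξ i * (π (i, j) - π' (i, j))) + ∑ j, η j * (π (i, j) - π' (i, j)) :=
            Finset.sum_add_distrib
        _ = ξ i * (r i - r' i) + ∑ j, η j * (π (i, j) - π' (i, j)) := by
            rw [← Finset.mul_sum, Finset.sum_sub_distrib, hπ.2.1 i, hπ'.2.1 i]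
    calc ∑ ij : Fin N × Fin N, (π ij - π' ij) * (ξ ij.1 + η ij.2)
        = ∑ i, ∑ j, (π (i, j) - π' (i, j)) * (ξ i + η j) := by rw [Fintype.sum_prod_type]
      _ = ∑ i, (ξ i * (r i - r' i) + ∑ j, η j * (π (i, j) - π' (i, j))) :=
          Finset.sum_congr rfl fun i _ => hsplit i
      _ = (∑ i, ξ i * (r i - r' i)) + ∑ i, ∑ j, η j * (π (i, j) - π' (i, j)) :=
          Finset.sum_add_distrib
      _ = (∑ i, ξ i * (r i - r' i)) + ∑ j, η j * (s j - s' j) := by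
          congr 1
          rw [Finset.sum_comm]
          refine Finset.sum_congr rfl fun j _ => ?_
          rw [← Finset.mul_sum, Finset.sum_sub_distrib, hπ.2.2 j, hπ'.2.2 j]
  -- square expansion
  have hsq : ∑ ij : Fin N × Fin N, (ξ ij.1 + η ij.2)^2 =
      N * (∑ i, ξ i ^ 2) + N * (∑ j, η j ^ 2) := by
    calc ∑ ij : Fin N × Fin N, (ξ ij.1 + η ij.2)^2
        = ∑ i, ∑ j, (ξ i + η j)^2 := by rw [Fintype.sum_prod_type]
      _ = ∑ i, ((N : ℝ) * ξ i ^ 2 + 2 * ξ i * (∑ j, η j) + ∑ j, η j ^ 2) :=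
          Finset.sum_congr rfl fun i _ =>
            calc ∑ j, (ξ i + η j)^2
                = ∑ j, (ξ i ^ 2 + 2 * ξ i * η j + η j ^ 2) :=
                  Finset.sum_congr rfl fun j _ => by ring
              _ = ((∑ _j : Fin N, ξ i ^ 2) + ∑ j, 2 * ξ i * η j) + ∑ j, η j ^ 2 := by
                  rw [Finset.sum_add_distrib, Finset.sum_add_distrib]
              _ = (N : ℝ) * ξ i ^ 2 + 2 * ξ i * (∑ j, η j) + ∑ j, η j ^ 2 := by
                  rw [Finset.sum_const, Finset.card_univ, Fintype.card_fin, nsmul_eq_mul]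
                  have h5 : ∑ j, 2 * ξ i * η j = 2 * ξ i * ∑ j, η j := by
                    rw [Finset.mul_sum]
                  rw [h5]
      _ = N * (∑ i, ξ i ^ 2) + N * (∑ j, η j ^ 2) := by
          rw [Finset.sum_add_distrib, Finset.sum_add_distrib, ← Finset.mul_sum,
            Finset.sum_const, Finset.card_univ, Fintype.card_fin, nsmul_eq_mul]
          have h6 : ∑ i, 2 * ξ i * (∑ j, η j) = 2 * (∑ i, ξ i) * (∑ j, η j) := by
            rw [← Finset.sum_mul, ← Finset.mul_sum]
          rw [h6, hξ0]
          ring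
  set T : ℝ := Real.sqrt ((∑ i, ξ i ^ 2) + ∑ j, η j ^ 2) with hTdef
  have hT0 : 0 ≤ T := Real.sqrt_nonneg _
  have hPQ0 : (0:ℝ) ≤ (∑ i, ξ i ^ 2) + ∑ j, η j ^ 2 :=
    add_nonneg (Finset.sum_nonneg fun i _ => sq_nonneg _)
      (Finset.sum_nonneg fun j _ => sq_nonneg _)
  have hT2 : T ^ 2 = (∑ i, ξ i ^ 2) + ∑ j, η j ^ 2 := Real.sq_sqrt hPQ0
  set δ : ℝ := prodNorm (r - r') (s - s') with hδdef
  have hδeq : δ = Real.sqrt ((∑ i, (r i - r' i)^2) + ∑ j, (s j - s' j)^2) := by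
    simp only [hδdef, prodNorm, Pi.sub_apply]
  have hδ0 : 0 ≤ δ := by rw [hδeq]; exact Real.sqrt_nonneg _
  have hξT : ∀ i, |ξ i| ≤ T := by
    intro i
    rw [← Real.sqrt_sq_eq_abs, hTdef]
    apply Real.sqrt_le_sqrt
    have h7 : ξ i ^ 2 ≤ ∑ i', ξ i' ^ 2 :=
      Finset.single_le_sum (fun i' _ => sq_nonneg (ξ i')) (Finset.mem_univ i)
    have h8 : (0:ℝ) ≤ ∑ j, η j ^ 2 := Finset.sum_nonneg fun j _ => sq_nonneg _
    linarith
  have hηT : ∀ j, |η j| ≤ T := by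
    intro j
    rw [← Real.sqrt_sq_eq_abs, hTdef]
    apply Real.sqrt_le_sqrt
    have h7 : η j ^ 2 ≤ ∑ j', η j' ^ 2 :=
      Finset.single_le_sum (fun j' _ => sq_nonneg (η j')) (Finset.mem_univ j)
    have h8 : (0:ℝ) ≤ ∑ i, ξ i ^ 2 := Finset.sum_nonneg fun i _ => sq_nonneg _
    linarith
  -- Cauchy-Schwarz bound on the pairing
  have hpairT : (∑ i, ξ i * (r i - r' i)) + ∑ j, η j * (s j - s' j) ≤ 2 * T * δ := by
    have hcs1 : ∑ i, ξ i * (r i - r' i) ≤ T * δ := by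
      calc ∑ i, ξ i * (r i - r' i)
          ≤ Real.sqrt (∑ i, ξ i ^ 2) * Real.sqrt (∑ i, (r i - r' i)^2) :=
            cs_sum ξ (fun i => r i - r' i)
        _ ≤ T * δ := by
            apply mul_le_mul
            · rw [hTdef]
              apply Real.sqrt_le_sqrt
              have h8 : (0:ℝ) ≤ ∑ j, η j ^ 2 := Finset.sum_nonneg fun j _ => sq_nonneg _
              linarith
            · rw [hδeq]
              apply Real.sqrt_le_sqrt
              have h8 : (0:ℝ) ≤ ∑ j, (s j - s' j)^2 := Finset.sum_nonneg fun j _ => sq_nonneg _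
              linarith
            · exact Real.sqrt_nonneg _
            · exact hT0
    have hcs2 : ∑ j, η j * (s j - s' j) ≤ T * δ := by
      calc ∑ j, η j * (s j - s' j)
          ≤ Real.sqrt (∑ j, η j ^ 2) * Real.sqrt (∑ j, (s j - s' j)^2) :=
            cs_sum η (fun j => s j - s' j)
        _ ≤ T * δ := by
            apply mul_le_mul
            · rw [hTdef]
              apply Real.sqrt_le_sqrt
              have h8 : (0:ℝ) ≤ ∑ i, ξ i ^ 2 := Finset.sum_nonneg fun i _ => sq_nonneg _
              linarith
            · rw [hδeq]
              apply Real.sqrt_le_sqrt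
              have h8 : (0:ℝ) ≤ ∑ i, (r i - r' i)^2 := Finset.sum_nonneg fun i _ => sq_nonneg _
              linarith
            · exact Real.sqrt_nonneg _
            · exact hT0
    linarith
  -- main estimate on T
  have hTδ : (ρ * N / lam) * T ^ 2 ≤ 2 * T * δ := by
    have hksum : (ρ / lam) * ∑ ij : Fin N × Fin N, (ξ ij.1 + η ij.2)^2 ≤
        ∑ ij : Fin N × Fin N, (π ij - π' ij) * (ξ ij.1 + η ij.2) := by
      rw [Finset.mul_sum]
      exact Finset.sum_le_sum fun ij _ => key ij
    rw [hsq] at hksum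
    rw [hpair] at hksum
    calc (ρ * N / lam) * T ^ 2
        = (ρ / lam) * ((N : ℝ) * (∑ i, ξ i ^ 2) + N * (∑ j, η j ^ 2)) := by
          rw [hT2]; ring
      _ ≤ (∑ i, ξ i * (r i - r' i)) + ∑ j, η j * (s j - s' j) := hksum
      _ ≤ 2 * T * δ := hpairT
  have hTbound : T ≤ 2 * lam * δ / (ρ * N) := by
    rcases eq_or_lt_of_le hT0 with hT | hT
    · rw [← hT]
      positivity
    · rw [le_div_iff₀ (mul_pos hρ hN0)]
      have h9 := mul_le_mul_of_nonneg_right hTδ hlam.le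
      have h9' : ρ * (N:ℝ) * T ^ 2 ≤ 2 * T * δ * lam := by
        calc ρ * (N:ℝ) * T ^ 2 = ρ * ↑N / lam * T ^ 2 * lam := by field_simp
          _ ≤ 2 * T * δ * lam := h9
      nlinarith [h9', hT, hlam, hρ, hN0, hδ0]
  -- pointwise plan difference
  have hptdiff : ∀ ij : Fin N × Fin N, |π ij - π' ij| ≤ (|ξ ij.1| + |η ij.2|) / lam := by
    intro ij
    have hl := scalar_lip (hA0 ij) (hA0' ij)
    rw [← hπA ij, ← hπA' ij, hAd ij] at hl
    calc |π ij - π' ij| ≤ |(ξ ij.1 + η ij.2) / lam| := hl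
      _ = |ξ ij.1 + η ij.2| / lam := by rw [abs_div, abs_of_pos hlam]
      _ ≤ (|ξ ij.1| + |η ij.2|) / lam := (div_le_div_iff_of_pos_right hlam).mpr (abs_add_le _ _)
  -- final chain
  have hρne : ρ ≠ 0 := ne_of_gt hρ
  have hNne : (N:ℝ) ≠ 0 := ne_of_gt hN0
  have hterm : ∀ ij : Fin N × Fin N, |c ij * (π ij - π' ij)| ≤ Mc * (2 * T / lam) := by
    intro ij
    rw [abs_mul, abs_of_nonneg (hc0 ij)]
    have h9 := hptdiff ij
    have h10 : (|ξ ij.1| + |η ij.2|) / lam ≤ 2 * T / lam :=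
      (div_le_div_iff_of_pos_right hlam).mpr (by linarith [hξT ij.1, hηT ij.2])
    have h11 : |π ij - π' ij| ≤ 2 * T / lam := le_trans h9 h10
    exact mul_le_mul (hcM ij) h11 (abs_nonneg _) hMc0
  have hdiff : (∑ ij, c ij * π ij) - ∑ ij, c ij * π' ij =
      ∑ ij : Fin N × Fin N, c ij * (π ij - π' ij) :=
    calc (∑ ij, c ij * π ij) - ∑ ij, c ij * π' ij
        = ∑ ij : Fin N × Fin N, (c ij * π ij - c ij * π' ij) := (Finset.sum_sub_distrib _ _).symm
      _ = ∑ ij : Fin N × Fin N, c ij * (π ij - π' ij) :=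
          Finset.sum_congr rfl fun ij _ => by ring
  rw [hdiff]
  calc |∑ ij : Fin N × Fin N, c ij * (π ij - π' ij)|
      ≤ ∑ ij : Fin N × Fin N, |c ij * (π ij - π' ij)| := Finset.abs_sum_le_sum_abs _ _
    _ ≤ ∑ _ij : Fin N × Fin N, Mc * (2 * T / lam) := Finset.sum_le_sum fun ij _ => hterm ij
    _ = ((N : ℝ) * N) * (Mc * (2 * T / lam)) := by
        rw [Finset.sum_const, Finset.card_univ, Fintype.card_prod, Fintype.card_fin,
          nsmul_eq_mul]
        push_cast
        ring
    _ ≤ (4 * Mc * N / ρ) * δ := by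
        have h13 : (0:ℝ) ≤ 2 * N * N * Mc / lam := by positivity
        calc ((N:ℝ) * N) * (Mc * (2 * T / lam)) = (2 * N * N * Mc / lam) * T := by ring
          _ ≤ (2 * N * N * Mc / lam) * (2 * lam * δ / (ρ * N)) :=
              mul_le_mul_of_nonneg_left hTbound h13
          _ = (4 * Mc * N / ρ) * δ := by field_simp; ring

end PWproof

namespace PWproof

lemma proj_sq_le {d k : ℕ} {E : Fin d → Fin k → ℝ} (hE : E ∈ Stiefel d k) (v : Fin d → ℝ) :
    ∑ a, (proj E v a) ^ 2 ≤ ∑ b, v b ^ 2 := by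
  have horth : ∀ a a' : Fin k, ∑ b, E b a * E b a' = if a = a' then (1:ℝ) else 0 := by
    intro a a'
    have h1 := congrFun (congrFun hE a) a'
    simpa [Matrix.mul_apply, Matrix.transpose_apply, Matrix.one_apply] using h1
  set w : Fin k → ℝ := proj E v with hw
  have hvw : ∑ b, v b * (∑ a, E b a * w a) = ∑ a, w a ^ 2 := by
    calc ∑ b, v b * (∑ a, E b a * w a) = ∑ b, ∑ a, v b * (E b a * w a) :=
          Finset.sum_congr rfl fun b _ => Finset.mul_sum _ _ _
      _ = ∑ a, ∑ b, v b * (E b a * w a) := Finset.sum_comm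
      _ = ∑ a, w a ^ 2 := by
          refine Finset.sum_congr rfl fun a _ => ?_
          have h2 : ∑ b, v b * (E b a * w a) = (∑ b, E b a * v b) * w a := by
            rw [Finset.sum_mul]
            exact Finset.sum_congr rfl fun b _ => by ring
          rw [h2]
          have hwa : w a = ∑ b, E b a * v b := rfl
          rw [← hwa]
          ring
  have hww : ∑ b, (∑ a, E b a * w a) ^ 2 = ∑ a, w a ^ 2 := by
    calc ∑ b, (∑ a, E b a * w a) ^ 2
        = ∑ b, ∑ a, ∑ a', (E b a * w a) * (E b a' * w a') := by
          refine Finset.sum_congr rfl fun b _ => ?_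
          rw [sq, Finset.sum_mul_sum]
      _ = ∑ a, ∑ a', (∑ b, E b a * E b a') * (w a * w a') := by
          rw [Finset.sum_comm]
          refine Finset.sum_congr rfl fun a _ => ?_
          rw [Finset.sum_comm]
          refine Finset.sum_congr rfl fun a' _ => ?_
          rw [Finset.sum_mul]
          exact Finset.sum_congr rfl fun b _ => by ring
      _ = ∑ a, w a ^ 2 := by
          refine Finset.sum_congr rfl fun a _ => ?_
          calc ∑ a', (∑ b, E b a * E b a') * (w a * w a')
              = ∑ a', (if a = a' then (1:ℝ) else 0) * (w a * w a') :=
                Finset.sum_congr rfl fun a' _ => by rw [horth]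
            _ = w a ^ 2 := by
                simp only [ite_mul, one_mul, zero_mul]
                rw [Finset.sum_ite_eq, if_pos (Finset.mem_univ a)]
                exact (sq (w a)).symm
  have hnn : (0:ℝ) ≤ ∑ b, (v b - ∑ a, E b a * w a) ^ 2 :=
    Finset.sum_nonneg fun b _ => sq_nonneg _
  have hexpand : ∑ b, (v b - ∑ a, E b a * w a) ^ 2 =
      (∑ b, v b ^ 2) - 2 * (∑ b, v b * (∑ a, E b a * w a)) + ∑ b, (∑ a, E b a * w a) ^ 2 := by
    calc ∑ b, (v b - ∑ a, E b a * w a) ^ 2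
        = ∑ b, (v b ^ 2 - 2 * (v b * (∑ a, E b a * w a)) + (∑ a, E b a * w a) ^ 2) :=
          Finset.sum_congr rfl fun b _ => by ring
      _ = _ := by
          rw [Finset.sum_add_distrib, Finset.sum_sub_distrib, ← Finset.mul_sum]
  rw [hexpand, hvw, hww] at hnn
  linarith

lemma stiefel_inj {d k : ℕ} (ι : Fin k → Fin d) (hι : Function.Injective ι) :
    (fun b a => if b = ι a then (1:ℝ) else 0) ∈ Stiefel d k := by
  show (Matrix.of _)ᵀ * Matrix.of _ = 1
  ext a a'
  rw [Matrix.mul_apply, Matrix.one_apply]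
  simp only [Matrix.transpose_apply, Matrix.of_apply]
  by_cases h : a = a'
  · subst h
    rw [if_pos rfl]
    have he : ∀ b, (if b = ι a then (1:ℝ) else 0) * (if b = ι a then (1:ℝ) else 0) =
        if b = ι a then 1 else 0 := fun b => by by_cases h1 : b = ι a <;> simp [h1]
    rw [Finset.sum_congr rfl fun b _ => he b,
      Finset.sum_ite_eq' Finset.univ (ι a) (fun _ => (1:ℝ)), if_pos (Finset.mem_univ _)]
  · rw [if_neg h]
    apply Finset.sum_eq_zero
    intro b _
    by_cases h1 : b = ι a
    · have h2 : ¬ b = ι a' := fun h2 => h (hι (by rw [← h1, h2]))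
      rw [if_neg h2, mul_zero]
    · rw [if_neg h1, zero_mul]

lemma proj_inj {d k : ℕ} (ι : Fin k → Fin d) (v : Fin d → ℝ) (a : Fin k) :
    proj (fun b a' => if b = ι a' then (1:ℝ) else 0) v a = v (ι a) := by
  show ∑ b, (if b = ι a then (1:ℝ) else 0) * v b = v (ι a)
  simp only [ite_mul, one_mul, zero_mul]
  rw [Finset.sum_ite_eq' Finset.univ (ι a) v, if_pos (Finset.mem_univ _)]

lemma eNorm_nonneg {n : ℕ} (v : Fin n → ℝ) : 0 ≤ eNorm v := Real.sqrt_nonneg _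

lemma eNorm_proj_le {d k : ℕ} {E : Fin d → Fin k → ℝ} (hE : E ∈ Stiefel d k) (v : Fin d → ℝ) :
    eNorm (proj E v) ≤ eNorm v :=
  Real.sqrt_le_sqrt (proj_sq_le hE v)

lemma abs_le_eNorm {n : ℕ} (v : Fin n → ℝ) (a : Fin n) : |v a| ≤ eNorm v := by
  rw [← Real.sqrt_sq_eq_abs]
  exact Real.sqrt_le_sqrt (Finset.single_le_sum (fun i _ => sq_nonneg (v i)) (Finset.mem_univ a))

lemma csSup_rpow {α : Type*} [Nonempty α] (f : α → ℝ) (q : ℝ) (hq0 : 0 < q)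
    (hf0 : ∀ a, 0 ≤ f a) {M : ℝ} (hfM : ∀ a, f a ≤ M) :
    sSup (Set.range fun a => f a ^ q) = (sSup (Set.range f)) ^ q := by
  have hbdd : BddAbove (Set.range f) := ⟨M, by rintro y ⟨a, rfl⟩; exact hfM a⟩
  have hbdd' : BddAbove (Set.range fun a => f a ^ q) := ⟨M ^ q, by
    rintro y ⟨a, rfl⟩
    exact Real.rpow_le_rpow (hf0 a) (hfM a) hq0.le⟩
  have hne : (Set.range f).Nonempty := Set.range_nonempty f
  have hne' : (Set.range fun a => f a ^ q).Nonempty := Set.range_nonempty _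
  have hg0 : 0 ≤ sSup (Set.range f) :=
    le_trans (hf0 (Classical.arbitrary α)) (le_csSup hbdd ⟨Classical.arbitrary α, rfl⟩)
  apply le_antisymm
  · apply csSup_le hne'
    rintro y ⟨a, rfl⟩
    exact Real.rpow_le_rpow (hf0 a) (le_csSup hbdd ⟨a, rfl⟩) hq0.le
  · set T := sSup (Set.range fun a => f a ^ q) with hT
    have hT0 : 0 ≤ T := le_trans (Real.rpow_nonneg (hf0 (Classical.arbitrary α)) q)
      (le_csSup hbdd' ⟨Classical.arbitrary α, rfl⟩)
    have hfT : ∀ a, f a ≤ T ^ (1/q) := by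
      intro a
      have h1 : f a ^ q ≤ T := le_csSup hbdd' ⟨a, rfl⟩
      have h2 : (f a ^ q) ^ (1/q) ≤ T ^ (1/q) :=
        Real.rpow_le_rpow (Real.rpow_nonneg (hf0 a) q) h1 (by positivity)
      rwa [← Real.rpow_mul (hf0 a), mul_one_div, div_self (ne_of_gt hq0),
        Real.rpow_one] at h2
    have h3 : sSup (Set.range f) ≤ T ^ (1/q) :=
      csSup_le hne (by rintro y ⟨a, rfl⟩; exact hfT a)
    have h4 : (sSup (Set.range f)) ^ q ≤ (T ^ (1/q)) ^ q := Real.rpow_le_rpow hg0 h3 hq0.le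
    rwa [← Real.rpow_mul hT0, one_div, inv_mul_cancel₀ (ne_of_gt hq0), Real.rpow_one] at h4

end PWproof


open PWproof

open MeasureTheory ProbabilityTheory Filter Topology Matrix PRW

/-- Local Lipschitz continuity of `(r,s) ↦ PW_{p,λ}(r,s)` on `Δ_N × Δ_N`:
on every compact `K ⊆ Δ_N × Δ_N` the map is Lipschitz with some constant `C ≥ 0`. -/
theorem PW_locally_lipschitz {N d k : ℕ} (hN : 1 ≤ N) (hd : 1 ≤ d)
    (hk : 1 ≤ k) (hkd : k ≤ d) (x : Fin N → Fin d → ℝ)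
    (p : ℕ) (hp : 0 < p) (hpeven : Even p) (lam : ℝ) (hlam : 0 < lam)
    (plan : (Fin N → ℝ) → (Fin N → ℝ) → (Fin d → Fin k → ℝ) → Fin N × Fin N → ℝ)
    (hplan : IsEntPlan x (p : ℝ) lam plan) :
    ∀ K : Set ((Fin N → ℝ) × (Fin N → ℝ)), K ⊆ simplex N ×ˢ simplex N → IsCompact K →
      ∃ C : ℝ, 0 ≤ C ∧ ∀ rs ∈ K, ∀ rs' ∈ K,
        |PW x (p : ℝ) plan rs.1 rs.2 - PW x (p : ℝ) plan rs'.1 rs'.2| ≤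
          C * prodNorm (rs.1 - rs'.1) (rs.2 - rs'.2) := by
  intro K hK hKcomp
  haveI hFinN : Nonempty (Fin N) := ⟨⟨0, hN⟩⟩
  have hp0 : (0:ℝ) < (p:ℝ) := by exact_mod_cast hp
  have hp1 : (1:ℝ) ≤ (p:ℝ) := by exact_mod_cast hp
  have hq0 : 0 < 1 / (p:ℝ) := by positivity
  have hq1 : 1 / (p:ℝ) ≤ 1 := by rw [div_le_one hp0]; exact hp1
  haveI hSneI : Nonempty (Stiefel d k) :=
    Set.Nonempty.to_subtype ⟨_, stiefel_inj (Fin.castLE hkd) (Fin.castLE_injective hkd)⟩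
  by_cases hdeg : ∀ i j : Fin N, x i = x j
  · refine ⟨0, le_refl 0, fun rs _ rs' _ => ?_⟩
    have hPW0 : ∀ r s : Fin N → ℝ, PW x (p:ℝ) plan r s = 0 := by
      intro r s
      have hW : (fun E : Stiefel d k => Wpl x (p:ℝ) plan r s E.1) = fun _ => (0:ℝ) := by
        funext E
        show (∑ ij, pcost x E.1 (p:ℝ) ij * plan r s E.1 ij) ^ (1/(p:ℝ)) = 0
        have hc : ∀ ij : Fin N × Fin N, pcost x E.1 (p:ℝ) ij = 0 := by
          intro ij
          show eNorm (proj E.1 (x ij.1 - x ij.2)) ^ (p:ℝ) = 0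
          rw [hdeg ij.1 ij.2, sub_self]
          have h1 : proj E.1 (0 : Fin d → ℝ) = fun _ => 0 := by
            funext a
            show ∑ b, E.1 b a * (0 : Fin d → ℝ) b = 0
            simp
          rw [h1]
          have h2 : eNorm (fun _ : Fin k => (0:ℝ)) = 0 := by
            show Real.sqrt (∑ _i : Fin k, (0:ℝ) ^ 2) = 0
            simp
          rw [h2]
          exact Real.zero_rpow (ne_of_gt hp0)
        have h3 : (∑ ij, pcost x E.1 (p:ℝ) ij * plan r s E.1 ij) = 0 :=
          Finset.sum_eq_zero fun ij _ => by rw [hc ij, zero_mul]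
        rw [h3]
        exact Real.zero_rpow (ne_of_gt hq0)
      show sSup (Set.range fun E : Stiefel d k => Wpl x (p:ℝ) plan r s E.1) = 0
      rw [hW, Set.range_const, csSup_singleton]
    rw [hPW0, hPW0]
    simp [Real.sqrt_nonneg]
  · push_neg at hdeg
    obtain ⟨i₀, j₀, hx0⟩ := hdeg
    have hvne : ∃ b : Fin d, x i₀ b - x j₀ b ≠ 0 := by
      by_contra hb
      push_neg at hb
      exact hx0 (funext fun b => by have := hb b; linarith)
    obtain ⟨bs, hbs⟩ := hvne
    rcases Set.eq_empty_or_nonempty K with hKe | hKne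
    · refine ⟨0, le_refl 0, fun rs hrs => ?_⟩
      rw [hKe] at hrs
      exact absurd hrs (Set.notMem_empty rs)
    have hc1 : ∀ i : Fin N, ∃ m1 : ℝ, 0 < m1 ∧ ∀ rs ∈ K, m1 ≤ rs.1 i := by
      intro i
      obtain ⟨z, hzK, hz⟩ := hKcomp.exists_isMinOn hKne
        ((continuous_apply i).comp continuous_fst).continuousOn
      exact ⟨z.1 i, (hK hzK).1.1 i, fun rs hrs => isMinOn_iff.mp hz rs hrs⟩
    have hc2 : ∀ i : Fin N, ∃ m2 : ℝ, 0 < m2 ∧ ∀ rs ∈ K, m2 ≤ rs.2 i := by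
      intro i
      obtain ⟨z, hzK, hz⟩ := hKcomp.exists_isMinOn hKne
        ((continuous_apply i).comp continuous_snd).continuousOn
      exact ⟨z.2 i, (hK hzK).2.1 i, fun rs hrs => isMinOn_iff.mp hz rs hrs⟩
    choose m1 hm10 hm1 using hc1
    choose m2 hm20 hm2 using hc2
    obtain ⟨m, hm0, hmK1, hmK2⟩ : ∃ m : ℝ, 0 < m ∧ (∀ rs ∈ K, ∀ i, m ≤ rs.1 i) ∧
        (∀ rs ∈ K, ∀ i, m ≤ rs.2 i) := by
      refine ⟨Finset.univ.inf' Finset.univ_nonempty (fun i => min (m1 i) (m2 i)), ?_, ?_, ?_⟩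
      · rw [Finset.lt_inf'_iff]
        exact fun i _ => lt_min (hm10 i) (hm20 i)
      · intro rs hrs i
        exact le_trans (Finset.inf'_le _ (Finset.mem_univ i))
          (le_trans (min_le_left _ _) (hm1 i rs hrs))
      · intro rs hrs i
        exact le_trans (Finset.inf'_le _ (Finset.mem_univ i))
          (le_trans (min_le_right _ _) (hm2 i rs hrs))
    have hprodne : (Finset.univ : Finset (Fin N × Fin N)).Nonempty := Finset.univ_nonempty
    set M : ℝ := Finset.univ.sup' hprodne (fun ij : Fin N × Fin N => eNorm (x ij.1 - x ij.2))
      with hMdef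
    have hM0 : 0 ≤ M := le_trans (eNorm_nonneg (x i₀ - x j₀))
      (Finset.le_sup' (f := fun ij : Fin N × Fin N => eNorm (x ij.1 - x ij.2))
        (Finset.mem_univ (i₀, j₀)))
    set Mc : ℝ := M ^ (p:ℝ) with hMcdef
    have hMc0 : 0 ≤ Mc := Real.rpow_nonneg hM0 _
    have hcost0 : ∀ (E : Fin d → Fin k → ℝ) (ij : Fin N × Fin N), 0 ≤ pcost x E (p:ℝ) ij :=
      fun E ij => Real.rpow_nonneg (eNorm_nonneg _) _
    have hcostM : ∀ E ∈ Stiefel d k, ∀ ij : Fin N × Fin N, pcost x E (p:ℝ) ij ≤ Mc := by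
      intro E hE ij
      show eNorm (proj E (x ij.1 - x ij.2)) ^ (p:ℝ) ≤ M ^ (p:ℝ)
      exact Real.rpow_le_rpow (eNorm_nonneg _)
        (le_trans (eNorm_proj_le hE _)
          (Finset.le_sup' (f := fun ij : Fin N × Fin N => eNorm (x ij.1 - x ij.2))
            (Finset.mem_univ ij))) hp0.le
    set ρ : ℝ := Real.exp (-(2 * Mc) / lam) * (m * m) with hρdef
    have hρ0 : 0 < ρ := mul_pos (Real.exp_pos _) (mul_pos hm0 hm0)
    have master : ∀ z ∈ K, ∀ E ∈ Stiefel d k,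
        plan z.1 z.2 E ∈ planSet N z.1 z.2 ∧ (∀ ij, plan z.1 z.2 E ij ≤ 1) ∧
        (∀ ij, ρ ≤ plan z.1 z.2 E ij) ∧
        ∃ u v : Fin N → ℝ, (∑ i, u i) = 0 ∧
          (∀ ij : Fin N × Fin N, lam * Real.log (plan z.1 z.2 E ij) =
            u ij.1 + v ij.2 - pcost x E (p:ℝ) ij) := by
      intro z hz E hE
      have hzs := hK hz
      have hr : z.1 ∈ simplex N := hzs.1
      have hs : z.2 ∈ simplex N := hzs.2
      have hrp : z.1 ∈ probVec N := ⟨fun i => (hr.1 i).le, hr.2⟩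
      have hsp : z.2 ∈ probVec N := ⟨fun i => (hs.1 i).le, hs.2⟩
      obtain ⟨hmem, hminz⟩ := hplan z.1 z.2 E hrp hsp
      have hpos := plan_pos (pcost x E (p:ℝ)) hlam hr hs hmem hminz
      obtain ⟨u, v, hu0, hrep⟩ := exists_potentials hN (pcost x E (p:ℝ)) hlam hmem hpos hminz
      have hsum1 := planSet_sum_one hr.2 hmem
      have hlb := plan_lb (pcost x E (p:ℝ)) hlam (hcost0 E) (hcostM E hE) hmem hsum1 hpos hrep
      refine ⟨hmem, planSet_le_one hrp hmem, fun ij => ?_, u, v, hu0,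
        fun ij => hrep ij.1 ij.2⟩
      have h5 := hlb ij.1 ij.2
      have h6 : m * m ≤ z.1 ij.1 * z.2 ij.2 :=
        mul_le_mul (hmK1 z hz ij.1) (hmK2 z hz ij.2) hm0.le
          (le_trans hm0.le (hmK1 z hz ij.1))
      have h7 : ρ ≤ Real.exp (-(2 * Mc) / lam) * (z.1 ij.1 * z.2 ij.2) := by
        rw [hρdef]
        exact mul_le_mul_of_nonneg_left h6 (Real.exp_pos _).le
      exact le_trans h7 h5
    set Lf : ℝ := 4 * Mc * (N:ℝ) / ρ with hLfdef
    have hLf0 : 0 ≤ Lf := by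
      rw [hLfdef]
      have hN0 : (0:ℝ) < N := by exact_mod_cast (by omega : 0 < N)
      positivity
    have hfdiff : ∀ z ∈ K, ∀ z' ∈ K, ∀ E ∈ Stiefel d k,
        |(∑ ij, pcost x E (p:ℝ) ij * plan z.1 z.2 E ij) -
          ∑ ij, pcost x E (p:ℝ) ij * plan z'.1 z'.2 E ij| ≤
          Lf * prodNorm (z.1 - z'.1) (z.2 - z'.2) := by
      intro z hz z' hz' E hE
      obtain ⟨hmem, hle1, hlb, u, v, hu0, hrep⟩ := master z hz E hE
      obtain ⟨hmem', hle1', hlb', u', v', hu0', hrep'⟩ := master z' hz' E hE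
      exact stab hN (pcost x E (p:ℝ)) hlam hρ0 hMc0 (hcost0 E) (hcostM E hE)
        hmem hmem' hle1 hle1' hlb hlb' hrep hrep' hu0 hu0'
    -- the witness direction E₀
    set b₀ : Fin d := Fin.castLE hkd ⟨0, hk⟩ with hb₀
    set ι : Fin k → Fin d := fun a => Equiv.swap b₀ bs (Fin.castLE hkd a) with hιdef
    have hιinj : Function.Injective ι := fun a a' h =>
      Fin.castLE_injective hkd ((Equiv.swap b₀ bs).injective h)
    set E₀ : Fin d → Fin k → ℝ := fun b a => if b = ι a then 1 else 0 with hE₀def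
    have hE₀ : E₀ ∈ Stiefel d k := stiefel_inj ι hιinj
    have hc₀pos : 0 < pcost x E₀ (p:ℝ) (i₀, j₀) := by
      show 0 < eNorm (proj E₀ (x i₀ - x j₀)) ^ (p:ℝ)
      apply Real.rpow_pos_of_pos
      have h8b : ι ⟨0, hk⟩ = bs := by
        show Equiv.swap b₀ bs (Fin.castLE hkd ⟨0, hk⟩) = bs
        rw [← hb₀]
        exact Equiv.swap_apply_left b₀ bs
      have h8 : proj E₀ (x i₀ - x j₀) ⟨0, hk⟩ = (x i₀ - x j₀) bs := by
        rw [← h8b]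
        exact proj_inj ι (x i₀ - x j₀) ⟨0, hk⟩
      have h9 : (x i₀ - x j₀) bs ≠ 0 := hbs
      have h10 : 0 < |proj E₀ (x i₀ - x j₀) ⟨0, hk⟩| := by
        rw [h8]
        exact abs_pos.mpr h9
      exact lt_of_lt_of_le h10 (abs_le_eNorm _ _)
    set g₀ : ℝ := pcost x E₀ (p:ℝ) (i₀, j₀) * ρ with hg₀def
    have hg₀0 : 0 < g₀ := mul_pos hc₀pos hρ0
    set gv : ((Fin N → ℝ) × (Fin N → ℝ)) → ℝ := fun z =>
      sSup (Set.range fun E : Stiefel d k =>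
        ∑ ij, pcost x E.1 (p:ℝ) ij * plan z.1 z.2 E.1 ij) with hgvdef
    have hgfacts : ∀ z ∈ K, (g₀ ≤ gv z) ∧ (∀ E : Stiefel d k,
        0 ≤ (∑ ij, pcost x E.1 (p:ℝ) ij * plan z.1 z.2 E.1 ij) ∧
        (∑ ij, pcost x E.1 (p:ℝ) ij * plan z.1 z.2 E.1 ij) ≤ Mc) := by
      intro z hz
      have hbase : ∀ E : Stiefel d k,
          0 ≤ (∑ ij, pcost x E.1 (p:ℝ) ij * plan z.1 z.2 E.1 ij) ∧
          (∑ ij, pcost x E.1 (p:ℝ) ij * plan z.1 z.2 E.1 ij) ≤ Mc := by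
        intro E
        obtain ⟨hmem, hle1, hlb, -⟩ := master z hz E.1 E.2
        constructor
        · exact Finset.sum_nonneg fun ij _ => mul_nonneg (hcost0 E.1 ij) (hmem.1 ij)
        · calc ∑ ij, pcost x E.1 (p:ℝ) ij * plan z.1 z.2 E.1 ij
              ≤ ∑ ij, Mc * plan z.1 z.2 E.1 ij := Finset.sum_le_sum fun ij _ =>
                mul_le_mul_of_nonneg_right (hcostM E.1 E.2 ij) (hmem.1 ij)
            _ = Mc * ∑ ij, plan z.1 z.2 E.1 ij := (Finset.mul_sum _ _ _).symm
            _ = Mc := by rw [planSet_sum_one (hK hz).1.2 hmem, mul_one]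
      refine ⟨?_, hbase⟩
      obtain ⟨hmem, hle1, hlb, -⟩ := master z hz E₀ hE₀
      have h11 : g₀ ≤ ∑ ij, pcost x E₀ (p:ℝ) ij * plan z.1 z.2 E₀ ij := by
        have h12 : pcost x E₀ (p:ℝ) (i₀, j₀) * ρ ≤
            pcost x E₀ (p:ℝ) (i₀, j₀) * plan z.1 z.2 E₀ (i₀, j₀) :=
          mul_le_mul_of_nonneg_left (hlb (i₀, j₀)) (hcost0 E₀ (i₀, j₀))
        have h13 : pcost x E₀ (p:ℝ) (i₀, j₀) * plan z.1 z.2 E₀ (i₀, j₀) ≤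
            ∑ ij, pcost x E₀ (p:ℝ) ij * plan z.1 z.2 E₀ ij :=
          Finset.single_le_sum (fun ij _ => mul_nonneg (hcost0 E₀ ij) (hmem.1 ij))
            (Finset.mem_univ (i₀, j₀))
        rw [hg₀def]
        exact le_trans h12 h13
      exact le_trans h11 (le_csSup ⟨Mc, by rintro y ⟨E, rfl⟩; exact (hbase E).2⟩
        ⟨⟨E₀, hE₀⟩, rfl⟩)
    have hPWg : ∀ z ∈ K, PW x (p:ℝ) plan z.1 z.2 = gv z ^ (1/(p:ℝ)) := by
      intro z hz
      have h14 := csSup_rpow (f := fun E : Stiefel d k =>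
          ∑ ij, pcost x E.1 (p:ℝ) ij * plan z.1 z.2 E.1 ij) (1/(p:ℝ)) hq0
        (fun E => ((hgfacts z hz).2 E).1) (fun E => ((hgfacts z hz).2 E).2)
      exact h14
    have hgl : ∀ z ∈ K, ∀ z' ∈ K, |gv z - gv z'| ≤
        Lf * prodNorm (z.1 - z'.1) (z.2 - z'.2) := by
      intro z hz z' hz'
      have hboundK : ∀ w ∈ K, ∀ w' ∈ K, gv w ≤ gv w' +
          Lf * prodNorm (w.1 - w'.1) (w.2 - w'.2) := by
        intro w hw w' hw'
        apply csSup_le (Set.range_nonempty _)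
        rintro y ⟨E, rfl⟩
        have h15 := hfdiff w hw w' hw' E.1 E.2
        have h17 : ∑ ij, pcost x E.1 (p:ℝ) ij * plan w'.1 w'.2 E.1 ij ≤ gv w' :=
          le_csSup ⟨Mc, by rintro y ⟨E', rfl⟩; exact ((hgfacts w' hw').2 E').2⟩ ⟨E, rfl⟩
        have h16 := (abs_le.mp h15).2
        show (∑ ij, pcost x E.1 (p:ℝ) ij * plan w.1 w.2 E.1 ij) ≤
          gv w' + Lf * prodNorm (w.1 - w'.1) (w.2 - w'.2)
        linarith
      have h18 := hboundK z hz z' hz'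
      have h19 := hboundK z' hz' z hz
      have hsymm : prodNorm (z'.1 - z.1) (z'.2 - z.2) = prodNorm (z.1 - z'.1) (z.2 - z'.2) := by
        simp only [prodNorm, Pi.sub_apply]
        have e1 : ∀ (a b : Fin N → ℝ), ∑ i, (a i - b i) ^ 2 = ∑ i, (b i - a i) ^ 2 :=
          fun a b => Finset.sum_congr rfl fun i _ => by ring
        rw [e1 z'.1 z.1, e1 z'.2 z.2]
      rw [hsymm] at h19
      exact abs_le.mpr ⟨by linarith, by linarith⟩
    have hC0 : 0 ≤ (1/(p:ℝ)) * g₀ ^ (1/(p:ℝ) - 1) :=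
      mul_nonneg hq0.le (Real.rpow_nonneg hg₀0.le _)
    refine ⟨(1/(p:ℝ)) * g₀ ^ (1/(p:ℝ) - 1) * Lf, mul_nonneg hC0 hLf0, ?_⟩
    intro rs hrs rs' hrs'
    rw [hPWg rs hrs, hPWg rs' hrs']
    have h20 := rpow_diff_le hq0 hq1 hg₀0 ((hgfacts rs hrs).1) ((hgfacts rs' hrs').1)
    have h21 := hgl rs hrs rs' hrs'
    calc |gv rs ^ (1/(p:ℝ)) - gv rs' ^ (1/(p:ℝ))|
        ≤ (1/(p:ℝ)) * g₀ ^ (1/(p:ℝ) - 1) * |gv rs - gv rs'| := h20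
      _ ≤ (1/(p:ℝ)) * g₀ ^ (1/(p:ℝ) - 1) *
            (Lf * prodNorm (rs.1 - rs'.1) (rs.2 - rs'.2)) :=
          mul_le_mul_of_nonneg_left h21 hC0
      _ = (1/(p:ℝ)) * g₀ ^ (1/(p:ℝ) - 1) * Lf * prodNorm (rs.1 - rs'.1) (rs.2 - rs'.2) := by
          ring
end
end
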